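/- arXiv:2604.24754 — 8 statements merged into one kernel-verified Lean document; each statement's English description precedes it below -/
import Mathlib

section
/- Let σ ≥ 0 and let μ be a complex measure on the Borel σ-algebra of [0,1) whose total variation satisfies |μ|([x,1)) ≤ K(1−x)^σ for some constant K < ∞ and all x ∈ [0,1). Define u_m = ∫_{[0,1)} x^m dμ(x) for real m ≥ 0 and E(t) = ∫_{[0,1)} e^{tx} dμ(x). Then u_m = e^{−m} E(m) + O(m^{−(1+σ)}) as m → ∞; i.e., there exist C < ∞ and m₀ such that |u_m − e^{−m}E(m)| ≤ C m^{−(1+σ)} for all real m ≥ m₀. -/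
/-!
Write `u_m - e^{-m} E(m) = ∫ (x^m - e^{m(x-1)}) dμ`. On `[0,1)` one has
`0 ≤ e^{m(x-1)} - x^m ≤ m (1-x)^2 e^{-m(1-x)} ≤ (8/m) e^{-m(1-x)/2}`, so the difference is at most
`8/m` times the Laplace transform at `m/2` of the distance `1 - x` to the endpoint under `|μ|`.
Writing `e^{-r t} = ∫_t^∞ r e^{-r s} ds` and exchanging the integrals turns the tail bound
`|μ|(1 - x < s) ≤ K s^σ` into the bound `K Γ(σ+1) r^{-σ}` for that Laplace transform.
-/

open MeasureTheory Set Real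
open scoped ENNReal

lemma rpow_le_exp_mul_sub_one {x m : ℝ} (hx : 0 ≤ x) (hm : 0 ≤ m) :
    x ^ m ≤ exp (m * (x - 1)) :=
  calc x ^ m ≤ exp (x - 1) ^ m := by gcongr; linarith [add_one_le_exp (x - 1)]
    _ = exp (m * (x - 1)) := by rw [← exp_mul, mul_comm]

lemma exp_mul_sub_one_sub_rpow_le {x m : ℝ} (hx₀ : 0 ≤ x) (hm : 1 ≤ m) :
    exp (m * (x - 1)) - x ^ m ≤ m * (1 - x) ^ 2 * exp (m * (x - 1)) := by
  set a := x * exp (1 - x)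
  have hx_pow : x ^ m = exp (m * (x - 1)) * a ^ m := by
    rw [mul_rpow hx₀ (exp_pos _).le, ← exp_mul, mul_left_comm, ← exp_add]
    ring_nf
    simp
  have hbernoulli : 1 - a ^ m ≤ m * (1 - a) := by
    have := one_add_mul_self_le_rpow_one_add (s := a - 1)
      (by linarith [show 0 ≤ a by positivity]) hm
    rw [add_sub_cancel] at this
    linarith
  have ha : 1 - a ≤ (1 - x) ^ 2 := by
    have := mul_le_mul_of_nonneg_left (add_one_le_exp (1 - x)) hx₀
    nlinarith
  calc exp (m * (x - 1)) - x ^ m = exp (m * (x - 1)) * (1 - a ^ m) := by rw [hx_pow]; ring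
    _ ≤ exp (m * (x - 1)) * (m * (1 - x) ^ 2) := by
        gcongr
        nlinarith
    _ = m * (1 - x) ^ 2 * exp (m * (x - 1)) := by ring

lemma sq_mul_exp_neg_le {t : ℝ} (ht : 0 ≤ t) : t ^ 2 * exp (-t) ≤ 8 * exp (-(t / 2)) := by
  have hsq : t ^ 2 ≤ 8 * exp (t / 2) := by
    have := pow_div_factorial_le_exp (x := t / 2) (by positivity) 2
    norm_num [Nat.factorial] at this
    linarith
  calc t ^ 2 * exp (-t) ≤ 8 * exp (t / 2) * exp (-t) := by gcongr
    _ = 8 * exp (-(t / 2)) := by rw [mul_assoc, ← exp_add]; ring_nf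

lemma abs_rpow_sub_exp_mul_sub_one_le {x m : ℝ} (hx₀ : 0 ≤ x) (hx₁ : x ≤ 1) (hm : 1 ≤ m) :
    |x ^ m - exp (m * (x - 1))| ≤ 8 / m * exp (-(m / 2 * (1 - x))) := by
  have hm₀ : 0 < m := by linarith
  have ht : 0 ≤ m * (1 - x) := mul_nonneg hm₀.le (by linarith)
  rw [abs_sub_comm, abs_of_nonneg (sub_nonneg.mpr (rpow_le_exp_mul_sub_one hx₀ hm₀.le))]
  calc exp (m * (x - 1)) - x ^ m ≤ m * (1 - x) ^ 2 * exp (m * (x - 1)) :=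
        exp_mul_sub_one_sub_rpow_le hx₀ hm
    _ = (m * (1 - x)) ^ 2 * exp (-(m * (1 - x))) / m := by
        field_simp
        ring_nf
    _ ≤ 8 * exp (-(m * (1 - x) / 2)) / m :=
        div_le_div_of_nonneg_right (sq_mul_exp_neg_le ht) hm₀.le
    _ = 8 / m * exp (-(m / 2 * (1 - x))) := by ring_nf

lemma lintegral_Ioi_mul_exp_neg_mul {r : ℝ} (hr : 0 < r) (t : ℝ) :
    ∫⁻ s in Ioi t, ENNReal.ofReal (r * exp (-(r * s))) = ENNReal.ofReal (exp (-(r * t))) := by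
  have hint : IntegrableOn (fun s ↦ exp (-r * s)) (Ioi t) :=
    integrableOn_exp_mul_Ioi (by linarith) t
  rw [← ofReal_integral_eq_lintegral_ofReal (by simpa using hint.const_mul r)
    (.of_forall fun s ↦ by positivity), integral_const_mul]
  simp only [← neg_mul]
  rw [integral_exp_mul_Ioi (by linarith)]
  congr 1
  field_simp

lemma lintegral_Ioi_rpow_mul_exp_neg_mul {σ r : ℝ} (hσ : -1 < σ) (hr : 0 < r) :
    ∫⁻ s in Ioi 0, ENNReal.ofReal (r * exp (-(r * s)) * s ^ σ) =
      ENNReal.ofReal (Gamma (σ + 1) * r ^ (-σ)) := by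
  have hint : IntegrableOn (fun s ↦ s ^ σ * exp (-(r * s))) (Ioi 0) := by
    simpa using integrableOn_rpow_mul_exp_neg_mul_rpow hσ one_pos hr
  have hgamma := integral_rpow_mul_exp_neg_mul_Ioi (a := σ + 1) (by linarith) hr
  rw [add_sub_cancel_right] at hgamma
  have hr_pow : r * (1 / r) ^ (σ + 1) = r ^ (-σ) := by
    rw [one_div, inv_rpow hr.le, ← rpow_neg hr.le, neg_add, rpow_add hr, rpow_neg_one]
    field_simp
  simp_rw [mul_assoc, mul_comm (exp _)]
  rw [← ofReal_integral_eq_lintegral_ofReal (hint.const_mul r), integral_const_mul, hgamma,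
    ← mul_assoc, hr_pow, mul_comm]
  filter_upwards [ae_restrict_mem measurableSet_Ioi] with s (hs : 0 < s)
  positivity

lemma lintegral_exp_neg_mul_le_of_measure_lt_le {α : Type*} [MeasurableSpace α] {ν : Measure α}
    [SFinite ν] {φ : α → ℝ} (hφ : Measurable φ) (hφ_nonneg : ∀ᵐ x ∂ν, 0 ≤ φ x) {σ r : ℝ}
    (hσ : -1 < σ) (hr : 0 < r) {K : ℝ≥0∞}
    (hK : ∀ s > 0, ν {x | φ x < s} ≤ K * ENNReal.ofReal (s ^ σ)) :
    ∫⁻ x, ENNReal.ofReal (exp (-(r * φ x))) ∂ν ≤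
      K * ENNReal.ofReal (Gamma (σ + 1) * r ^ (-σ)) := by
  set c : ℝ → ℝ≥0∞ := fun s ↦ ENNReal.ofReal (r * exp (-(r * s)))
  have hswap : AEMeasurable (Function.uncurry fun x s ↦ (Ioi (φ x)).indicator c s)
      (ν.prod volume) :=
    ((by fun_prop : Measurable c).comp measurable_snd |>.indicator
      (measurableSet_lt (hφ.comp measurable_fst) measurable_snd)).aemeasurable
  have hsection (s : ℝ) : ∫⁻ x, (Ioi (φ x)).indicator c s ∂ν = c s * ν {x | φ x < s} := by
    rw [← lintegral_indicator_const (measurableSet_lt hφ measurable_const)]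
    rfl
  have hsection_le (s : ℝ) : c s * ν {x | φ x < s} ≤
      (Ioi 0).indicator (fun s ↦ K * ENNReal.ofReal (r * exp (-(r * s)) * s ^ σ)) s := by
    rcases lt_or_ge 0 s with hs | hs
    · rw [indicator_of_mem (mem_Ioi.mpr hs), ENNReal.ofReal_mul (by positivity), mul_left_comm]
      gcongr
      exact hK s hs
    · have hnull : ν {x | φ x < s} = 0 :=
        measure_mono_null (fun x (hx : φ x < s) ↦ not_le.mpr (hx.trans_le hs))
          (ae_iff.mp hφ_nonneg)
      simp [hnull]
  calc ∫⁻ x, ENNReal.ofReal (exp (-(r * φ x))) ∂ν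
      = ∫⁻ x, ∫⁻ s, (Ioi (φ x)).indicator c s ∂volume ∂ν := by
        simp_rw [lintegral_indicator measurableSet_Ioi, c, lintegral_Ioi_mul_exp_neg_mul hr]
    _ = ∫⁻ s, c s * ν {x | φ x < s} := by
        rw [lintegral_lintegral_swap hswap]
        simp_rw [hsection]
    _ ≤ ∫⁻ s in Ioi 0, K * ENNReal.ofReal (r * exp (-(r * s)) * s ^ σ) := by
        rw [← lintegral_indicator measurableSet_Ioi]
        exact lintegral_mono hsection_le
    _ = K * ENNReal.ofReal (Gamma (σ + 1) * r ^ (-σ)) := by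
        rw [lintegral_const_mul K (by fun_prop), lintegral_Ioi_rpow_mul_exp_neg_mul hσ hr]

lemma measure_restrict_Ico_one_sub_lt_le {ν : Measure ℝ} {σ K : ℝ} (hσ : 0 ≤ σ)
    (hK : ∀ x ∈ Ico (0:ℝ) 1, ν (Ico x 1) ≤ ENNReal.ofReal (K * (1 - x) ^ σ)) {s : ℝ}
    (hs : 0 < s) :
    ν.restrict (Ico 0 1) {x | 1 - x < s} ≤ ENNReal.ofReal K * ENNReal.ofReal (s ^ σ) := by
  rw [Measure.restrict_apply (measurableSet_lt (by fun_prop) measurable_const)]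
  rcases le_or_gt s 1 with hs₁ | hs₁
  · calc ν ({x | 1 - x < s} ∩ Ico 0 1) ≤ ν (Ico (1 - s) 1) :=
          measure_mono fun x ⟨(hx : 1 - x < s), hx'⟩ ↦ ⟨by linarith, hx'.2⟩
      _ ≤ ENNReal.ofReal K * ENNReal.ofReal (s ^ σ) := by
          rw [← ENNReal.ofReal_mul' (by positivity)]
          simpa using hK (1 - s) ⟨by linarith, by linarith⟩
  · calc ν ({x | 1 - x < s} ∩ Ico 0 1) ≤ ν (Ico 0 1) := measure_mono inter_subset_right
      _ ≤ ENNReal.ofReal K := by simpa using hK 0 ⟨le_rfl, one_pos⟩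
      _ ≤ ENNReal.ofReal K * ENNReal.ofReal (s ^ σ) :=
          le_mul_of_one_le_right' (ENNReal.one_le_ofReal.mpr (one_le_rpow hs₁.le hσ))

lemma isFiniteMeasure_restrict_Ico_of_le {ν : Measure ℝ} {σ K : ℝ}
    (hK : ∀ x ∈ Ico (0:ℝ) 1, ν (Ico x 1) ≤ ENNReal.ofReal (K * (1 - x) ^ σ)) :
    IsFiniteMeasure (ν.restrict (Ico 0 1)) :=
  ⟨by simpa using (hK 0 ⟨le_rfl, one_pos⟩).trans_lt ENNReal.ofReal_lt_top⟩

lemma setIntegral_rpow_mul_sub_exp_neg_mul_setIntegral_exp_mul {ν : Measure ℝ} {h : ℝ → ℂ}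
    (hh : IntegrableOn h (Ico 0 1) ν) {m : ℝ} (hm : 0 ≤ m) :
    (∫ x in Ico (0:ℝ) 1, ((x ^ m : ℝ) : ℂ) * h x ∂ν) -
        (exp (-m) : ℂ) * ∫ x in Ico (0:ℝ) 1, ((exp (m * x) : ℝ) : ℂ) * h x ∂ν =
      ∫ x in Ico (0:ℝ) 1, ((x ^ m - exp (m * (x - 1)) : ℝ) : ℂ) * h x ∂ν := by
  have hint {f : ℝ → ℝ} (hf : Continuous f) :
      IntegrableOn (fun x ↦ (f x : ℂ) * h x) (Ico 0 1) ν :=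
    hh.continuousOn_mul_of_subset (by fun_prop : Continuous fun x ↦ (f x : ℂ)).continuousOn
      isCompact_Icc measurableSet_Ico Ico_subset_Icc_self
  have hrpow : Continuous fun x : ℝ ↦ x ^ m := continuous_id.rpow_const fun _ ↦ .inr hm
  rw [← integral_const_mul, ← integral_sub (hint hrpow) ((hint (by fun_prop)).const_mul _)]
  congr 1 with x
  push_cast
  rw [← mul_assoc, ← Complex.exp_add]
  ring_nf

lemma norm_setIntegral_rpow_sub_exp_mul_sub_one_le {σ K : ℝ} (hσ : 0 ≤ σ) {ν : Measure ℝ}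
    (hK : ∀ x ∈ Ico (0:ℝ) 1, ν (Ico x 1) ≤ ENNReal.ofReal (K * (1 - x) ^ σ))
    {h : ℝ → ℂ} (hh : ∀ x, ‖h x‖ ≤ 1) {m : ℝ} (hm : 1 ≤ m) :
    ‖∫ x in Ico (0:ℝ) 1, ((x ^ m - exp (m * (x - 1)) : ℝ) : ℂ) * h x ∂ν‖ ≤
      8 / m * (max K 0 * (Gamma (σ + 1) * (m / 2) ^ (-σ))) := by
  have hm₀ : 0 < m := by linarith
  have := isFiniteMeasure_restrict_Ico_of_le hK
  have hpointwise : ∀ᵐ x ∂ν.restrict (Ico 0 1),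
      ENNReal.ofReal ‖((x ^ m - exp (m * (x - 1)) : ℝ) : ℂ) * h x‖ ≤
        ENNReal.ofReal (8 / m) * ENNReal.ofReal (exp (-(m / 2 * (1 - x)))) := by
    filter_upwards [ae_restrict_mem measurableSet_Ico] with x hx
    rw [← ENNReal.ofReal_mul (by positivity), norm_mul, Complex.norm_real, Real.norm_eq_abs]
    exact ENNReal.ofReal_le_ofReal <| (mul_le_of_le_one_right (abs_nonneg _) (hh x)).trans
      (abs_rpow_sub_exp_mul_sub_one_le hx.1 hx.2.le hm)
  have hlaplace := lintegral_exp_neg_mul_le_of_measure_lt_le (ν := ν.restrict (Ico 0 1))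
    (φ := fun x ↦ 1 - x) (by fun_prop)
    ((ae_restrict_mem measurableSet_Ico).mono fun x hx ↦ by linarith [hx.2])
    (by linarith) (half_pos hm₀) fun s hs ↦ measure_restrict_Ico_one_sub_lt_le hσ hK hs
  have hΓ : 0 ≤ Gamma (σ + 1) := Gamma_nonneg_of_nonneg (by linarith)
  calc _ ≤ _ := norm_integral_le_lintegral_norm _
    _ ≤ (ENNReal.ofReal (8 / m) *
          (ENNReal.ofReal K * ENNReal.ofReal (Gamma (σ + 1) * (m / 2) ^ (-σ)))).toReal := by
        refine ENNReal.toReal_mono (by finiteness) ((lintegral_mono_ae hpointwise).trans ?_)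
        rw [lintegral_const_mul _ (by fun_prop)]
        gcongr
    _ = 8 / m * (max K 0 * (Gamma (σ + 1) * (m / 2) ^ (-σ))) := by
        rw [ENNReal.toReal_mul, ENNReal.toReal_mul, ENNReal.toReal_ofReal (by positivity),
          ENNReal.toReal_ofReal', ENNReal.toReal_ofReal (by positivity)]

theorem moments_asymptotic_egf_general
    (σ : ℝ) (hσ : 0 ≤ σ)
    (ν : Measure ℝ)
    (h : ℝ → ℂ) (hmeas : Measurable h) (hmod : ∀ x, ‖h x‖ = 1)
    (K : ℝ) (hK : ∀ x ∈ Set.Ico (0:ℝ) 1, ν (Set.Ico x 1) ≤ ENNReal.ofReal (K * (1 - x) ^ σ)) :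
    ∃ C : ℝ, ∃ m₀ : ℝ, ∀ m : ℝ, m₀ ≤ m →
      ‖(∫ x in Set.Ico (0:ℝ) 1, ((x ^ m : ℝ) : ℂ) * h x ∂ν) -
        (Real.exp (-m) : ℂ) * ∫ x in Set.Ico (0:ℝ) 1, ((Real.exp (m * x) : ℝ) : ℂ) * h x ∂ν‖
        ≤ C * m ^ (-(1 + σ)) := by
  refine ⟨8 * 2 ^ σ * max K 0 * Gamma (σ + 1), 1, fun m hm ↦ ?_⟩
  have hm₀ : 0 < m := by linarith
  have := isFiniteMeasure_restrict_Ico_of_le hK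
  have hh : IntegrableOn h (Ico 0 1) ν :=
    Integrable.of_bound hmeas.aestronglyMeasurable 1 (.of_forall fun x ↦ (hmod x).le)
  rw [setIntegral_rpow_mul_sub_exp_neg_mul_setIntegral_exp_mul hh hm₀.le]
  calc _ ≤ 8 / m * (max K 0 * (Gamma (σ + 1) * (m / 2) ^ (-σ))) :=
        norm_setIntegral_rpow_sub_exp_mul_sub_one_le hσ hK (fun x ↦ (hmod x).le) hm
    _ = 8 * 2 ^ σ * max K 0 * Gamma (σ + 1) * m ^ (-(1 + σ)) := by
        rw [div_rpow hm₀.le two_pos.le, rpow_neg two_pos.le, neg_add, rpow_add hm₀, rpow_neg_one]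
        field_simp

/-- Let σ ≥ 0 and let μ be a complex measure on the Borel σ-algebra of
[0,1) whose total variation satisfies |μ|([x,1)) ≤ K(1−x)^σ. The complex measure is
represented via its polar decomposition: a finite positive Borel measure ν = |μ|
carried by [0,1), together with a measurable density h of modulus 1, so that
μ(E) = ∫_E h dν.  With u_m = ∫ x^m dμ and E(t) = ∫ e^{tx} dμ, one has
u_m = e^{−m} E(m) + O(m^{−(1+σ)}) as m → ∞. -/
theorem moments_asymptotic_egf
    (σ : ℝ) (hσ : 0 ≤ σ)
    (ν : Measure ℝ) [IsFiniteMeasure ν] (hν : ν (Set.Ico (0:ℝ) 1)ᶜ = 0)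
    (h : ℝ → ℂ) (hmeas : Measurable h) (hmod : ∀ x, ‖h x‖ = 1)
    (K : ℝ) (hK : ∀ x ∈ Set.Ico (0:ℝ) 1, ν (Set.Ico x 1) ≤ ENNReal.ofReal (K * (1 - x) ^ σ)) :
    ∃ C : ℝ, ∃ m₀ : ℝ, ∀ m : ℝ, m₀ ≤ m →
      ‖(∫ x in Set.Ico (0:ℝ) 1, ((x ^ m : ℝ) : ℂ) * h x ∂ν) -
        (Real.exp (-m) : ℂ) * ∫ x in Set.Ico (0:ℝ) 1, ((Real.exp (m * x) : ℝ) : ℂ) * h x ∂ν‖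
        ≤ C * m ^ (-(1 + σ)) :=
  moments_asymptotic_egf_general σ hσ ν h hmeas hmod K hK
end

section
/- For every positive real number m and every x ∈ [1/2, 1), one has 0 < e^{−m(1−x)} − x^m < m(1−x)^2 e^{−m(1−x)}. -/
/-- For every positive real m and every x ∈ [1/2, 1),
0 < e^{−m(1−x)} − x^m < m(1−x)² e^{−m(1−x)}. -/
theorem exp_power_inequality (m x : ℝ) (hm : 0 < m) (hx1 : 1/2 ≤ x) (hx2 : x < 1) :
    0 < Real.exp (-(m * (1 - x))) - x ^ m ∧
    Real.exp (-(m * (1 - x))) - x ^ m < m * (1 - x) ^ 2 * Real.exp (-(m * (1 - x))) := by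
  have hx0 : 0 < x := by linarith
  set t : ℝ := 1 - x with htdef
  have ht0 : 0 < t := by simp [htdef]; linarith
  have ht2 : t ≤ 1/2 := by simp [htdef]; linarith
  have hxm : x ^ m = Real.exp (m * Real.log x) := by
    rw [Real.rpow_def_of_pos hx0]; ring_nf
  -- key lower bound on log x
  have hlog : -t - t ^ 2 ≤ Real.log x := by
    rw [← Real.log_exp (-t - t ^ 2)]
    apply Real.log_le_log (Real.exp_pos _)
    have hq := Real.quadratic_le_exp_of_nonneg (x := t + t ^ 2) (by nlinarith)
    have h1 : (1 - t) * Real.exp (t + t ^ 2) ≥ 1 := by nlinarith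
    have h2 : Real.exp (-t - t ^ 2) = 1 / Real.exp (t + t ^ 2) := by
      rw [show -t - t ^ 2 = -(t + t ^ 2) by ring, Real.exp_neg, one_div]
    rw [h2, div_le_iff₀ (Real.exp_pos _)]
    have : x = 1 - t := by simp [htdef]
    nlinarith
  constructor
  · rw [hxm]
    have : m * Real.log x < -(m * t) := by
      have hl : Real.log x < x - 1 := Real.log_lt_sub_one_of_pos hx0 (by linarith)
      have : Real.log x < -t := by simpa [htdef] using hl
      nlinarith
    have := Real.exp_lt_exp.mpr this
    linarith
  · rw [hxm]
    have h1 : Real.exp (m * (-t - t ^ 2)) ≤ Real.exp (m * Real.log x) := by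
      apply Real.exp_le_exp.mpr
      nlinarith
    have h2 : Real.exp (m * (-t - t ^ 2)) = Real.exp (-(m * t)) * Real.exp (-(m * t ^ 2)) := by
      rw [← Real.exp_add]; ring_nf
    have h3 : 1 - m * t ^ 2 < Real.exp (-(m * t ^ 2)) := by
      have hp : 0 < m * t ^ 2 := by positivity
      have hne : -(m * t ^ 2) ≠ 0 := ne_of_lt (by linarith)
      have := Real.add_one_lt_exp hne
      linarith
    have hpos := Real.exp_pos (-(m * t))
    have h4 : Real.exp (-(m * t)) * (1 - m * t ^ 2) < Real.exp (m * Real.log x) := by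
      calc Real.exp (-(m * t)) * (1 - m * t ^ 2)
          < Real.exp (-(m * t)) * Real.exp (-(m * t ^ 2)) := by
            exact (mul_lt_mul_iff_right₀ hpos).mpr h3
        _ = Real.exp (m * (-t - t ^ 2)) := h2.symm
        _ ≤ Real.exp (m * Real.log x) := h1
    have hsq : (1 - x) ^ 2 = t ^ 2 := by rw [htdef]
    rw [hsq]
    nlinarith
end

section
/- Let σ ≥ 0 and let μ be a finite positive Borel measure on [0,1) satisfying μ([x,1)) ≤ K(1−x)^σ for some constant K < ∞ and all x ∈ [0,1). Then ∫_{[1/2,1)} (1−x)^2 e^{−m(1−x)} dμ(x) = O(m^{−(2+σ)}) as m → ∞; i.e., there exist C < ∞ and m₀ such that this integral is at most C m^{−(2+σ)} for all real m ≥ m₀. -/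
open MeasureTheory Real Set
open scoped Nat

/-!
Write `t = 1 - x`. Since `t² e^{-mt} ≤ ⌈q⌉! m^{-q} t^{2-q}` for every `q ≥ 0`, the integrand is at
most `S = 2 m⁻²` (take `q = 2`) and at most `D t^{-(σ+1)}` with `D ≍ m^{-(σ+3)}` (take `q = σ + 3`).
So its superlevel set at height `s` lies in `{t < (D/s)^{1/(σ+1)}}`, whose measure is
`≤ K (D/s)^{σ/(σ+1)}` by the tail condition, and the layer-cake formula bounds the integral by
`K ∫₀^S (D/s)^{σ/(σ+1)} ds ≍ D^{σ/(σ+1)} S^{1/(σ+1)} ≍ m^{-(2+σ)}`.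
-/

theorem Real.exp_neg_le_factorial_mul_rpow_neg {q u : ℝ} (hq : 0 ≤ q) (hu : 0 < u) :
    exp (-u) ≤ (⌈q⌉₊)! * u ^ (-q) := by
  have hpow : u ^ q ≤ (⌈q⌉₊)! * exp u := by
    rcases le_total u 1 with hu1 | hu1
    · calc u ^ q ≤ 1 * 1 := by rw [one_mul]; exact rpow_le_one hu.le hu1 hq
        _ ≤ (⌈q⌉₊)! * exp u := by
          gcongr
          · exact_mod_cast (⌈q⌉₊).factorial_pos
          · exact one_le_exp hu.le
    · calc u ^ q ≤ u ^ (⌈q⌉₊ : ℝ) := rpow_le_rpow_of_exponent_le hu1 (Nat.le_ceil q)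
        _ = u ^ ⌈q⌉₊ := rpow_natCast u _
        _ ≤ (⌈q⌉₊)! * exp u :=
          (div_le_iff₀' (by positivity)).mp (pow_div_factorial_le_exp _ hu.le _)
  rw [rpow_neg hu.le, le_mul_inv_iff₀ (rpow_pos_of_pos hu q), exp_neg,
    inv_mul_le_iff₀ (exp_pos u), mul_comm]
  exact hpow

theorem sq_mul_exp_neg_mul_le {q m t : ℝ} (hq : 0 ≤ q) (hm : 0 < m) (ht : 0 < t) :
    t ^ 2 * exp (-(m * t)) ≤ (⌈q⌉₊)! * m ^ (-q) * t ^ (2 - q) := by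
  calc t ^ 2 * exp (-(m * t)) ≤ t ^ 2 * ((⌈q⌉₊)! * (m * t) ^ (-q)) := by
        gcongr; exact exp_neg_le_factorial_mul_rpow_neg hq (mul_pos hm ht)
    _ = (⌈q⌉₊)! * m ^ (-q) * t ^ (2 - q) := by
        rw [mul_rpow hm.le ht.le, sub_eq_add_neg, rpow_add ht, rpow_two]; ring

theorem integral_le_setIntegral_of_meas_lt_le {α : Type*} [MeasurableSpace α] {ν : Measure α}
    {f : α → ℝ} {g : ℝ → ℝ} {S : ℝ} (hf : AEMeasurable f ν) (hf0 : 0 ≤ᵐ[ν] f)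
    (hfS : ∀ᵐ x ∂ν, f x ≤ S) (hg : IntegrableOn g (Ioc 0 S)) (hg0 : ∀ s ∈ Ioc 0 S, 0 ≤ g s)
    (hν : ∀ s ∈ Ioc 0 S, ν {x | s < f x} ≤ ENNReal.ofReal (g s)) :
    ∫ x, f x ∂ν ≤ ∫ s in Ioc 0 S, g s := by
  have hlevel : ∀ s ∈ Ioi 0,
      ν {x | s < f x} ≤ (Ioc 0 S).indicator (fun s ↦ ENNReal.ofReal (g s)) s := by
    intro s hs
    by_cases hsS : s ≤ S
    · rw [indicator_of_mem (show s ∈ Ioc 0 S from ⟨hs, hsS⟩)]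
      exact hν s ⟨hs, hsS⟩
    · refine (measure_eq_zero_iff_ae_notMem.mpr ?_).trans_le zero_le
      filter_upwards [hfS] with x hx
      simp only [not_lt]
      linarith
  have hlintegral : ∫⁻ x, ENNReal.ofReal (f x) ∂ν ≤ ∫⁻ s in Ioc 0 S, ENNReal.ofReal (g s) :=
    calc ∫⁻ x, ENNReal.ofReal (f x) ∂ν = ∫⁻ s in Ioi 0, ν {x | s < f x} :=
          lintegral_eq_lintegral_meas_lt ν hf0 hf
      _ ≤ ∫⁻ s in Ioi 0, (Ioc 0 S).indicator (fun s ↦ ENNReal.ofReal (g s)) s :=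
          setLIntegral_mono' measurableSet_Ioi hlevel
      _ = ∫⁻ s in Ioc 0 S, ENNReal.ofReal (g s) := by
          rw [lintegral_indicator measurableSet_Ioc, Measure.restrict_restrict measurableSet_Ioc,
            inter_eq_left.mpr Ioc_subset_Ioi_self]
  rw [integral_eq_lintegral_of_nonneg_ae hf0 hf.aestronglyMeasurable,
    integral_eq_lintegral_of_nonneg_ae (ae_restrict_of_forall_mem measurableSet_Ioc hg0)
      hg.aestronglyMeasurable]
  exact ENNReal.toReal_mono hg.lintegral_lt_top.ne hlintegral

theorem integral_le_of_meas_lt_le_mul_rpow_neg {α : Type*} [MeasurableSpace α]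
    {ν : Measure α} {f : α → ℝ} {A p S : ℝ} (hf : AEMeasurable f ν) (hf0 : 0 ≤ᵐ[ν] f)
    (hfS : ∀ᵐ x ∂ν, f x ≤ S) (hS : 0 ≤ S) (hA : 0 ≤ A) (hp : p < 1)
    (hν : ∀ s ∈ Ioc 0 S, ν {x | s < f x} ≤ ENNReal.ofReal (A * s ^ (-p))) :
    ∫ x, f x ∂ν ≤ A * S ^ (1 - p) / (1 - p) := by
  have hint : IntervalIntegrable (fun s ↦ A * s ^ (-p)) volume 0 S :=
    (intervalIntegral.intervalIntegrable_rpow' (by linarith)).const_mul A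
  refine (integral_le_setIntegral_of_meas_lt_le hf hf0 hfS
    ((intervalIntegrable_iff_integrableOn_Ioc_of_le hS).mp hint)
    (fun s hs ↦ mul_nonneg hA (rpow_nonneg hs.1.le _)) hν).trans_eq ?_
  rw [← intervalIntegral.integral_of_le hS, intervalIntegral.integral_const_mul,
    integral_rpow (Or.inl (by linarith)), zero_rpow (by linarith), neg_add_eq_sub]
  ring

section

variable {σ K : ℝ} {μ : Measure ℝ}

theorem measure_sub_lt_inter_Ico_le (hσ : 0 ≤ σ) (hK0 : 0 ≤ K)
    (hK : ∀ x ∈ Ico (0 : ℝ) 1, μ (Ico x 1) ≤ ENNReal.ofReal (K * (1 - x) ^ σ))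
    {δ : ℝ} (hδ : 0 < δ) :
    μ ({x | 1 - x < δ} ∩ Ico (1 / 2) 1) ≤ ENNReal.ofReal (K * δ ^ σ) := by
  set y := max (1 - δ) (1 / 2)
  have hy1 : y < 1 := max_lt (by linarith) (by norm_num)
  calc μ ({x | 1 - x < δ} ∩ Ico (1 / 2) 1) ≤ μ (Ico y 1) := by
        refine measure_mono fun x ⟨(hxδ : 1 - x < δ), hx⟩ ↦ ⟨max_le ?_ hx.1, hx.2⟩
        linarith
    _ ≤ ENNReal.ofReal (K * (1 - y) ^ σ) :=
        hK y ⟨by positivity, hy1⟩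
    _ ≤ ENNReal.ofReal (K * δ ^ σ) := by
        gcongr
        linarith [le_max_left (1 - δ) (1 / 2)]

theorem setIntegral_sq_mul_exp_neg_le (hσ : 0 ≤ σ) (hK0 : 0 ≤ K)
    (hK : ∀ x ∈ Ico (0 : ℝ) 1, μ (Ico x 1) ≤ ENNReal.ofReal (K * (1 - x) ^ σ))
    {m : ℝ} (hm : 0 < m) :
    ∫ x in Ico (1 / 2 : ℝ) 1, (1 - x) ^ 2 * exp (-(m * (1 - x))) ∂μ
      ≤ K * (⌈σ + 3⌉₊)! ^ (σ / (σ + 1)) * 2 ^ (σ + 1)⁻¹ * (σ + 1) * m ^ (-(2 + σ)) := by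
  set f := fun x : ℝ ↦ (1 - x) ^ 2 * exp (-(m * (1 - x)))
  set p := σ / (σ + 1) with hp
  set c : ℝ := (Nat.factorial ⌈σ + 3⌉₊ : ℝ)
  set D := c * m ^ (-(σ + 3))
  set S := 2 * m ^ (-2 : ℝ)
  have hσ1 : 0 < σ + 1 := by linarith
  have hD : 0 < D := by positivity
  have hp1 : 1 - p = (σ + 1)⁻¹ := by rw [hp]; field_simp; ring
  have hfS : ∀ x ∈ Ico (1 / 2 : ℝ) 1, f x ≤ S := by
    intro x hx
    simpa [S] using sq_mul_exp_neg_mul_le zero_le_two hm (sub_pos.mpr hx.2)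
  have hfD : ∀ x ∈ Ico (1 / 2 : ℝ) 1, f x ≤ D * (1 - x) ^ (-(σ + 1)) := by
    intro x hx
    have := sq_mul_exp_neg_mul_le (q := σ + 3) (by linarith) hm (sub_pos.mpr hx.2)
    rwa [show 2 - (σ + 3) = -(σ + 1) by ring] at this
  have hlevel : ∀ s ∈ Ioc 0 S, μ.restrict (Ico (1 / 2) 1) {x | s < f x}
      ≤ ENNReal.ofReal (K * D ^ p * s ^ (-p)) := by
    intro s hs
    rw [Measure.restrict_apply (measurableSet_lt measurable_const (by fun_prop))]
    calc μ ({x | s < f x} ∩ Ico (1 / 2) 1)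
        ≤ μ ({x | 1 - x < (D / s) ^ (σ + 1)⁻¹} ∩ Ico (1 / 2) 1) := by
          refine measure_mono fun x ⟨(hsx : s < f x), hx⟩ ↦ ⟨?_, hx⟩
          have ht : 0 < 1 - x := sub_pos.mpr hx.2
          have hsD := hsx.trans_le (hfD x hx)
          show 1 - x < (D / s) ^ (σ + 1)⁻¹
          rw [lt_rpow_inv_iff_of_pos ht.le (div_pos hD hs.1).le hσ1,
            lt_div_iff₀ hs.1]
          rwa [rpow_neg ht.le, lt_mul_inv_iff₀ (by positivity), mul_comm] at hsD
      _ ≤ ENNReal.ofReal (K * ((D / s) ^ (σ + 1)⁻¹) ^ σ) :=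
          measure_sub_lt_inter_Ico_le hσ hK0 hK (rpow_pos_of_pos (div_pos hD hs.1) _)
      _ = ENNReal.ofReal (K * D ^ p * s ^ (-p)) := by
          rw [← rpow_mul (div_pos hD hs.1).le, inv_mul_eq_div, ← hp, div_rpow hD.le hs.1.le,
            rpow_neg hs.1.le]
          congr 1
          ring
  calc ∫ x in Ico (1 / 2 : ℝ) 1, f x ∂μ ≤ K * D ^ p * S ^ (1 - p) / (1 - p) :=
        integral_le_of_meas_lt_le_mul_rpow_neg (by fun_prop) (ae_of_all _ fun x ↦ by positivity)
          ((ae_restrict_iff' measurableSet_Ico).mpr (ae_of_all _ hfS)) (by positivity)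
          (by positivity) (by rw [hp, div_lt_one hσ1]; linarith) hlevel
    _ = K * c ^ p * 2 ^ (σ + 1)⁻¹ * (σ + 1) * m ^ (-(2 + σ)) := by
        have hexp : -(σ + 3) * p + -2 * (σ + 1)⁻¹ = -(2 + σ) := by
          rw [hp]; field_simp; ring
        rw [hp1, mul_rpow (by positivity) (by positivity), mul_rpow zero_le_two (by positivity),
          ← rpow_mul hm.le, ← rpow_mul hm.le, div_inv_eq_mul, ← hexp, rpow_add hm]
        ring

end

theorem integral_holder_decay_general
    (σ : ℝ) (hσ : 0 ≤ σ)
    (μ : Measure ℝ)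
    (K : ℝ) (hK : ∀ x ∈ Set.Ico (0:ℝ) 1, μ (Set.Ico x 1) ≤ ENNReal.ofReal (K * (1 - x) ^ σ)) :
    ∃ C : ℝ, ∃ m₀ : ℝ, ∀ m : ℝ, m₀ ≤ m →
      (∫ x in Set.Ico (1/2 : ℝ) 1, (1 - x) ^ 2 * Real.exp (-(m * (1 - x))) ∂μ)
        ≤ C * m ^ (-(2 + σ)) := by
  refine ⟨max K 0 * (⌈σ + 3⌉₊)! ^ (σ / (σ + 1)) * 2 ^ (σ + 1)⁻¹ * (σ + 1), 1, fun m hm ↦ ?_⟩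
  refine setIntegral_sq_mul_exp_neg_le hσ (le_max_right K 0) (fun x hx ↦ (hK x hx).trans ?_)
    (by linarith)
  have hpow : 0 ≤ (1 - x) ^ σ := rpow_nonneg (by linarith [hx.2]) σ
  gcongr
  exact le_max_left K 0

/-- Let σ ≥ 0 and let μ be a finite positive Borel measure on [0,1)
satisfying μ([x,1)) ≤ K(1−x)^σ for all x ∈ [0,1).  Then
∫_{[1/2,1)} (1−x)² e^{−m(1−x)} dμ(x) = O(m^{−(2+σ)}) as m → ∞. -/
theorem integral_holder_decay
    (σ : ℝ) (hσ : 0 ≤ σ)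
    (μ : Measure ℝ) [IsFiniteMeasure μ] (hμ : μ (Set.Ico (0:ℝ) 1)ᶜ = 0)
    (K : ℝ) (hK : ∀ x ∈ Set.Ico (0:ℝ) 1, μ (Set.Ico x 1) ≤ ENNReal.ofReal (K * (1 - x) ^ σ)) :
    ∃ C : ℝ, ∃ m₀ : ℝ, ∀ m : ℝ, m₀ ≤ m →
      (∫ x in Set.Ico (1/2 : ℝ) 1, (1 - x) ^ 2 * Real.exp (-(m * (1 - x))) ∂μ)
        ≤ C * m ^ (-(2 + σ)) :=
  integral_holder_decay_general σ hσ μ K hK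
end

section
/- Assume b−1 ∈ A. Then for every integer k ≥ 0 and every complex s with Re s > log N / log b, the tail mass identity μ_s([1−b^{−k},1)) = b^{−ks} · b^s/(b^s−N) holds; explicitly, Σ_{l=0}^∞ Σ over those (a_1,…,a_l) ∈ A^l with a_1/b + ⋯ + a_l/b^l ≥ 1 − b^{−k} of b^{−ls} equals b^{−ks} · b^s/(b^s − N), where for l = 0 the empty tuple has value 0 and contributes 1 if and only if k = 0. -/
/-!
Digits lie in `[0, b - 1]`, so `a₁/b + ⋯ + a_l/b^l` falls short of `1 - b^{-l}` by
`∑ (b - 1 - aᵢ)/b^i`. Hence it reaches `1 - b^{-k}` exactly when `k ≤ l` and the first `k`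
digits are `b - 1`: level `l` contributes `N^{l-k} b^{-ls}` for `l ≥ k` and nothing below,
and the tail mass is the geometric series `b^{-ks} ∑ₘ (N b^{-s})^m`, convergent because
`N < b^{Re s}`.
-/

open Finset

noncomputable section

/-- The rational point a₁/b + ⋯ + a_l/b^l attached to a digit tuple. -/
def digitVal (b l : ℕ) (a : Fin l → ℕ) : ℝ :=
  ∑ i : Fin l, (a i : ℝ) / (b : ℝ) ^ ((i : ℕ) + 1)

/-- The finset of digit tuples of length l with entries in A. -/
def tuples (A : Finset ℕ) (l : ℕ) : Finset (Fin l → ℕ) :=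
  Fintype.piFinset fun _ => A

lemma sum_range_sub_one_div_pow_succ {K : Type*} [Field K] {x : K} (hx : x ≠ 0) (l : ℕ) :
    ∑ i ∈ range l, (x - 1) / x ^ (i + 1) = 1 - (x ^ l)⁻¹ := by
  induction l with
  | zero => simp
  | succ n ih =>
    rw [sum_range_succ, ih]
    field_simp
    ring

section Digits

variable {b l : ℕ} {a : Fin l → ℕ}

lemma one_sub_inv_pow_sub_digitVal (hb : b ≠ 0) :
    1 - ((b : ℝ) ^ l)⁻¹ - digitVal b l a
      = ∑ i : Fin l, (b - 1 - a i : ℝ) / (b : ℝ) ^ ((i : ℕ) + 1) := by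
  rw [← sum_range_sub_one_div_pow_succ (Nat.cast_ne_zero.2 hb : (b : ℝ) ≠ 0),
    ← Fin.sum_univ_eq_sum_range (fun i => ((b : ℝ) - 1) / (b : ℝ) ^ (i + 1)), digitVal,
    ← sum_sub_distrib]
  simp only [sub_div]

lemma digitVal_le_sub_inv_pow_succ (ha : ∀ i, a i < b) {j : Fin l} (hj : a j ≠ b - 1) :
    digitVal b l a ≤ 1 - ((b : ℝ) ^ l)⁻¹ - ((b : ℝ) ^ ((j : ℕ) + 1))⁻¹ := by
  have hb : b ≠ 0 := (ha j).ne_bot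
  have hdigit : ∀ i, (a i : ℝ) + 1 ≤ b := fun i => by exact_mod_cast ha i
  have hj' : (a j : ℝ) + 2 ≤ b := by exact_mod_cast (show a j + 2 ≤ b by grind)
  have hterm :
      ((b : ℝ) ^ ((j : ℕ) + 1))⁻¹ ≤ (b - 1 - a j : ℝ) / (b : ℝ) ^ ((j : ℕ) + 1) := by
    rw [inv_eq_one_div]
    gcongr
    linarith
  have hsingle := single_le_sum (fun i _ => div_nonneg (by linarith [hdigit i]) (by positivity))
    (mem_univ j) (f := fun i : Fin l => (b - 1 - a i : ℝ) / (b : ℝ) ^ ((i : ℕ) + 1))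
  linarith [one_sub_inv_pow_sub_digitVal (a := a) hb]

lemma digitVal_le_one_sub_inv_pow (hb : b ≠ 0) (ha : ∀ i, a i < b) :
    digitVal b l a ≤ 1 - ((b : ℝ) ^ l)⁻¹ := by
  have hdigit : ∀ i, (a i : ℝ) + 1 ≤ b := fun i => by exact_mod_cast ha i
  have : 0 ≤ ∑ i : Fin l, (b - 1 - a i : ℝ) / (b : ℝ) ^ ((i : ℕ) + 1) :=
    sum_nonneg fun i _ => div_nonneg (by linarith [hdigit i]) (by positivity)
  linarith [one_sub_inv_pow_sub_digitVal (a := a) hb]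

lemma one_sub_inv_pow_le_digitVal {k : ℕ} (hb : b ≠ 0) (hkl : k ≤ l)
    (ha : ∀ i : Fin l, (i : ℕ) < k → a i = b - 1) :
    1 - ((b : ℝ) ^ k)⁻¹ ≤ digitVal b l a := by
  calc 1 - ((b : ℝ) ^ k)⁻¹
      = ∑ i : Fin l,
          if (i : ℕ) < k then ((b : ℝ) - 1) / (b : ℝ) ^ ((i : ℕ) + 1) else 0 := by
        rw [Fin.sum_univ_eq_sum_range
            (fun i => if i < k then ((b : ℝ) - 1) / (b : ℝ) ^ (i + 1) else 0), ← sum_filter,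
          show (range l).filter (· < k) = range k by ext; simp; omega,
          sum_range_sub_one_div_pow_succ (Nat.cast_ne_zero.2 hb)]
    _ ≤ digitVal b l a := by
        refine sum_le_sum fun i _ => ?_
        split_ifs with hi
        · rw [ha i hi, Nat.cast_pred (Nat.pos_of_ne_zero hb)]
        · positivity

lemma one_sub_inv_pow_le_digitVal_iff {k : ℕ} (hb : 1 < b) (ha : ∀ i, a i < b) :
    1 - ((b : ℝ) ^ k)⁻¹ ≤ digitVal b l a ↔
      k ≤ l ∧ ∀ i : Fin l, (i : ℕ) < k → a i = b - 1 := by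
  have hb' : (1 : ℝ) < b := by exact_mod_cast hb
  refine ⟨fun h => ?_, fun h => one_sub_inv_pow_le_digitVal (by omega) h.1 h.2⟩
  have hkl : k ≤ l := by
    by_contra! hlk
    have := inv_strictAnti₀ (by positivity) (pow_lt_pow_right₀ hb' hlk)
    linarith [digitVal_le_one_sub_inv_pow (by omega) ha]
  refine ⟨hkl, fun i hi => ?_⟩
  by_contra hne
  have := inv_anti₀ (by positivity) (pow_le_pow_right₀ hb'.le (by omega : (i : ℕ) + 1 ≤ k))
  have : (0 : ℝ) < ((b : ℝ) ^ l)⁻¹ := by positivity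
  linarith [digitVal_le_sub_inv_pow_succ ha hne]

end Digits

lemma card_filter_tuples_prefix_eq (A : Finset ℕ) {d : ℕ} (hd : d ∈ A) (k l : ℕ) :
    ((tuples A l).filter fun a => ∀ i : Fin l, (i : ℕ) < k → a i = d).card
      = A.card ^ (l - k) := by
  have : (tuples A l).filter (fun a => ∀ i : Fin l, (i : ℕ) < k → a i = d)
      = Fintype.piFinset fun i : Fin l => if (i : ℕ) < k then {d} else A := by
    ext a
    simp only [tuples, mem_filter, Fintype.mem_piFinset]
    refine ⟨fun h i => ?_, fun h => ⟨fun i => ?_, fun i hi => ?_⟩⟩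
    · split_ifs with hi
      exacts [mem_singleton.2 (h.2 i hi), h.1 i]
    · have := h i
      split_ifs at this with hi
      exacts [mem_singleton.1 this ▸ hd, this]
    · simpa [hi] using h i
  rw [this, Fintype.card_piFinset]
  simp only [apply_ite card, card_singleton]
  rw [prod_ite, prod_const_one, one_mul, prod_const, filter_not,
    card_sdiff_of_subset (filter_subset _ _), Fin.card_filter_val_lt, card_univ, Fintype.card_fin]
  congr 1
  omega

lemma card_filter_tuples_one_sub_inv_pow_le {b : ℕ} (hb : 1 < b) {A : Finset ℕ}
    (hAb : A ⊆ range b) (hbA : b - 1 ∈ A) (k l : ℕ) :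
    ((tuples A l).filter fun a => 1 - ((b : ℝ) ^ k)⁻¹ ≤ digitVal b l a).card
      = if k ≤ l then A.card ^ (l - k) else 0 := by
  have hdigits : ∀ a ∈ tuples A l, ∀ i, a i < b := fun a ha i =>
    mem_range.1 (hAb (Fintype.mem_piFinset.1 ha i))
  rw [filter_congr fun a ha => one_sub_inv_pow_le_digitVal_iff hb (hdigits a ha)]
  split_ifs with hkl
  · simpa [hkl] using card_filter_tuples_prefix_eq A hbA k l
  · simp [hkl]

lemma tsum_ite_le_pow_sub_mul_pow {K : Type*} [NormedField K] {r x : K} (h : ‖r * x‖ < 1)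
    (k : ℕ) :
    ∑' l, (if k ≤ l then r ^ (l - k) else 0) * x ^ l = x ^ k * (1 - r * x)⁻¹ := by
  have hsupp : Function.support (fun l => (if k ≤ l then r ^ (l - k) else 0) * x ^ l)
      ⊆ Set.range (· + k) := by
    intro l hl
    by_cases hkl : k ≤ l
    · exact ⟨l - k, Nat.sub_add_cancel hkl⟩
    · simp [hkl] at hl
  rw [← (add_left_injective k).tsum_eq hsupp, ← tsum_geometric_of_norm_lt_one h,
    ← tsum_mul_left]
  congr 1 with m
  simp only [le_add_iff_nonneg_left, zero_le, if_true, Nat.add_sub_cancel, pow_add, mul_pow]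
  ring

lemma norm_natCast_mul_natCast_cpow_neg_lt_one {N b : ℕ} (hb : 1 < b) {s : ℂ}
    (hs : Real.log N / Real.log b < s.re) : ‖(N : ℂ) * (b : ℂ) ^ (-s)‖ < 1 := by
  rcases N.eq_zero_or_pos with rfl | hN
  · simp
  have hlogb : 0 < Real.log b := Real.log_pos (by exact_mod_cast hb)
  have hNlt : (N : ℝ) < (b : ℝ) ^ s.re := by
    rw [Real.lt_rpow_iff_log_lt (by exact_mod_cast hN) (by positivity)]
    rwa [div_lt_iff₀ hlogb] at hs
  rw [norm_mul, Complex.norm_natCast, Complex.norm_natCast_cpow_of_pos (by omega), Complex.neg_re,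
    Real.rpow_neg (by positivity), ← div_eq_mul_inv, div_lt_one (by positivity)]
  exact hNlt

theorem tail_mass_identity_general
    (b : ℕ) (hb : 2 ≤ b) (A : Finset ℕ) (hAb : A ⊆ Finset.range b)
    (hbA : b - 1 ∈ A)
    (s : ℂ) (hs : Real.log A.card / Real.log b < s.re) (k : ℕ) :
    ∑' l : ℕ, ∑ a ∈ (tuples A l).filter (fun a => 1 - (b : ℝ) ^ (-(k : ℤ)) ≤ digitVal b l a),
        (b : ℂ) ^ (-(l : ℂ) * s)
      = (b : ℂ) ^ (-(k : ℂ) * s) * (b : ℂ) ^ s / ((b : ℂ) ^ s - (A.card : ℂ)) := by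
  have hpow : ∀ n : ℕ, (b : ℂ) ^ (-(n : ℂ) * s) = ((b : ℂ) ^ (-s)) ^ n := fun n => by
    rw [← Complex.cpow_nat_mul, neg_mul_comm]
  have hterm : ∀ l : ℕ,
      ∑ _ ∈ (tuples A l).filter (fun a => 1 - (b : ℝ) ^ (-(k : ℤ)) ≤ digitVal b l a),
        (b : ℂ) ^ (-(l : ℂ) * s)
      = (if k ≤ l then (A.card : ℂ) ^ (l - k) else 0) * ((b : ℂ) ^ (-s)) ^ l := fun l => by
    rw [zpow_neg, zpow_natCast, sum_const,
      card_filter_tuples_one_sub_inv_pow_le (by omega) hAb hbA, nsmul_eq_mul, hpow]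
    push_cast [apply_ite]
    rfl
  have hratio := norm_natCast_mul_natCast_cpow_neg_lt_one (by omega) hs
  have hbs : (b : ℂ) ^ s ≠ 0 :=
    Complex.cpow_ne_zero_iff.2 (.inl (by exact_mod_cast (by omega : b ≠ 0)))
  have hden : (b : ℂ) ^ s - A.card ≠ 0 := by
    rw [sub_ne_zero]
    rintro heq
    rw [Complex.cpow_neg, ← heq, mul_inv_cancel₀ hbs, norm_one] at hratio
    exact lt_irrefl _ hratio
  rw [tsum_congr hterm, tsum_ite_le_pow_sub_mul_pow hratio, hpow, Complex.cpow_neg]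
  field_simp

/-- Assume b−1 ∈ A.  For every k ≥ 0 and Re s > log N / log b, the
tail mass of μ_s satisfies μ_s([1−b^{−k},1)) = b^{−ks}·b^s/(b^s−N). -/
theorem tail_mass_identity
    (b : ℕ) (hb : 2 ≤ b) (A : Finset ℕ) (hA : A.Nonempty) (hAb : A ⊆ Finset.range b)
    (hbA : b - 1 ∈ A)
    (s : ℂ) (hs : Real.log A.card / Real.log b < s.re) (k : ℕ) :
    ∑' l : ℕ, ∑ a ∈ (tuples A l).filter (fun a => 1 - (b : ℝ) ^ (-(k : ℤ)) ≤ digitVal b l a),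
        (b : ℂ) ^ (-(l : ℂ) * s)
      = (b : ℂ) ^ (-(k : ℂ) * s) * (b : ℂ) ^ s / ((b : ℂ) ^ s - (A.card : ℂ)) :=
  tail_mass_identity_general b hb A hAb hbA s hs k
end
end

section
/- Assume b−1 ∈ A and let s be a complex number with σ := Re s > log N / log b. Then there exists a constant K < ∞ such that for all x ∈ [0,1): Σ_{l=0}^∞ Σ over those (a_1,…,a_l) ∈ A^l with a_1/b + ⋯ + a_l/b^l ≥ x of b^{−lσ} ≤ K (1−x)^σ. In other words, the total variation measure |μ_s| = μ_σ of the discrete complex measure μ_s satisfies the Hölder condition |μ_s|([x,1)) ≤ K(1−x)^σ at 1. -/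
/-!
Multiplied by `b^m`, the points of length `m` are distinct integers below `b^m`, so at
most `b^m (1 - y)` of them lie in `[y, 1)`. Let `m` be the largest integer with
`b^m (1 - x) ≤ 1`. Then no point of length `l < m` lies in `[x, 1)`, and a tuple of length
`m + j` whose point lies in `[x, 1)` has a prefix of length `m` with point in
`[x - b^{-m}, 1)` (at most `b^m (1 - x) + 1 ≤ 2` choices) and an arbitrary suffix
(`N^j` choices). With `q = N b^{-σ} < 1` the mass of `[x, 1)` is at most
`2 b^{-mσ} / (1 - q)`, and `b^{-mσ} ≤ b^σ (1 - x)^σ` by maximality of `m`.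
-/

open Finset

noncomputable section

def tuplesGE (b : ℕ) (A : Finset ℕ) (l : ℕ) (x : ℝ) : Finset (Fin l → ℕ) :=
  (tuples A l).filter fun a => x ≤ digitVal b l a

def tailMass (b : ℕ) (A : Finset ℕ) (σ x : ℝ) : ENNReal :=
  ∑' l : ℕ, ∑ _a ∈ tuplesGE b A l x, ENNReal.ofReal ((b : ℝ) ^ (-(l : ℝ) * σ))

section DigitTuples

variable {b m j l : ℕ} {A : Finset ℕ}

lemma card_tuples (A : Finset ℕ) (l : ℕ) : (tuples A l).card = A.card ^ l := by
  simp [tuples]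

lemma digit_lt_of_mem_tuples (hAb : A ⊆ range b) {a : Fin l → ℕ} (ha : a ∈ tuples A l)
    (i : Fin l) : a i < b :=
  mem_range.mp (hAb (Fintype.mem_piFinset.mp ha i))

lemma digitVal_append (p : Fin m → ℕ) (q : Fin j → ℕ) :
    digitVal b (m + j) (Fin.append p q) = digitVal b m p + digitVal b j q / (b : ℝ) ^ m := by
  simp only [digitVal, Fin.sum_univ_add, Fin.append_left, Fin.append_right, sum_div,
    Fin.val_castAdd, Fin.val_natAdd, div_div, ← pow_add]
  congr 1
  refine sum_congr rfl fun i _ => ?_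
  ring_nf

lemma digitVal_le_one_sub (hb : 0 < b) {a : Fin l → ℕ} (ha : ∀ i, a i < b) :
    digitVal b l a ≤ 1 - (b : ℝ)⁻¹ ^ l := by
  have hb0 : (b : ℝ) ≠ 0 := by positivity
  calc digitVal b l a ≤ ∑ i ∈ range l, ((b : ℝ)⁻¹ ^ i - (b : ℝ)⁻¹ ^ (i + 1)) := by
        rw [← Fin.sum_univ_eq_sum_range]
        refine sum_le_sum fun i _ => ?_
        have hdigit : (a i : ℝ) ≤ b - 1 := le_sub_iff_add_le.mpr (by exact_mod_cast ha i)
        calc (a i : ℝ) / (b : ℝ) ^ ((i : ℕ) + 1) ≤ (b - 1) / (b : ℝ) ^ ((i : ℕ) + 1) := by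
              gcongr
          _ = _ := by rw [inv_pow, inv_pow]; field_simp; ring
    _ = 1 - (b : ℝ)⁻¹ ^ l := by rw [sum_range_sub']; simp

lemma digitVal_le_one (hb : 0 < b) {a : Fin l → ℕ} (ha : ∀ i, a i < b) : digitVal b l a ≤ 1 :=
  (digitVal_le_one_sub hb ha).trans (sub_le_self _ (by positivity))

def digitNat (b m : ℕ) (p : Fin m → ℕ) : ℕ := ∑ i : Fin m, p (Fin.rev i) * b ^ (i : ℕ)

lemma digitNat_eq_finFunctionFinEquiv {p : Fin m → ℕ} (hp : ∀ i, p i < b) :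
    digitNat b m p = finFunctionFinEquiv fun i => (⟨p (Fin.rev i), hp _⟩ : Fin b) := by
  rw [finFunctionFinEquiv_apply]
  rfl

lemma digitNat_lt {p : Fin m → ℕ} (hp : ∀ i, p i < b) : digitNat b m p < b ^ m := by
  rw [digitNat_eq_finFunctionFinEquiv hp]
  exact Fin.isLt _

lemma digitNat_injOn : Set.InjOn (digitNat b m) {p | ∀ i, p i < b} := by
  intro p hp p' hp' h
  rw [digitNat_eq_finFunctionFinEquiv hp, digitNat_eq_finFunctionFinEquiv hp'] at h
  have hrev := finFunctionFinEquiv.injective (Fin.val_injective h)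
  funext i
  simpa using congr_arg (fun f => (f (Fin.rev i) : ℕ)) hrev

lemma digitNat_cast (hb : b ≠ 0) (p : Fin m → ℕ) :
    (digitNat b m p : ℝ) = (b : ℝ) ^ m * digitVal b m p := by
  have hb0 : (b : ℝ) ≠ 0 := by exact_mod_cast hb
  rw [digitVal, mul_sum, ← Equiv.sum_comp Fin.revPerm, digitNat]
  push_cast
  refine sum_congr rfl fun i _ => ?_
  have hsplit : (b : ℝ) ^ m = (b : ℝ) ^ (i : ℕ) * (b : ℝ) ^ ((Fin.rev i : ℕ) + 1) := by
    rw [← pow_add, Fin.val_rev]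
    congr 1
    omega
  rw [Fin.revPerm_apply, hsplit]
  field_simp

lemma card_tuplesGE_le (hb : 0 < b) (hAb : A ⊆ range b) {y : ℝ} (hy : y ≤ 1) :
    ((tuplesGE b A m y).card : ℝ) ≤ (b : ℝ) ^ m * (1 - y) := by
  set c := ⌈(b : ℝ) ^ m * y⌉₊
  have hcard : (tuplesGE b A m y).card ≤ b ^ m - c := by
    rw [← Nat.card_Ico]
    refine card_le_card_of_injOn (digitNat b m) (fun p hp => ?_) ?_
    · rw [mem_coe, tuplesGE, mem_filter] at hp
      refine mem_Ico.mpr ⟨Nat.ceil_le.mpr ?_, digitNat_lt (digit_lt_of_mem_tuples hAb hp.1)⟩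
      rw [digitNat_cast hb.ne']
      exact mul_le_mul_of_nonneg_left hp.2 (by positivity)
    · exact digitNat_injOn.mono fun p hp => digit_lt_of_mem_tuples hAb (mem_filter.mp hp).1
  rcases le_total c (b ^ m) with hc | hc
  · have hceil := Nat.le_ceil ((b : ℝ) ^ m * y)
    calc _ ≤ ((b ^ m - c : ℕ) : ℝ) := by exact_mod_cast hcard
      _ = (b : ℝ) ^ m - c := by push_cast [hc]; ring
      _ ≤ (b : ℝ) ^ m * (1 - y) := by linarith
  · rw [Nat.sub_eq_zero_of_le hc, Nat.le_zero] at hcard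
    rw [hcard, Nat.cast_zero]
    exact mul_nonneg (by positivity) (by linarith)

lemma card_tuplesGE_add_le (hb : 0 < b) (hAb : A ⊆ range b) {x : ℝ} (hx : x ≤ 1) :
    ((tuplesGE b A (m + j) x).card : ℝ)
      ≤ ((b : ℝ) ^ m * (1 - x) + 1) * A.card ^ j := by
  set P := tuplesGE b A m (x - (b : ℝ)⁻¹ ^ m)
  have hsub : tuplesGE b A (m + j) x ⊆
      (P ×ˢ tuples A j).image fun pq => Fin.append pq.1 pq.2 := by
    intro a ha
    rw [tuplesGE, mem_filter] at ha
    refine mem_image.mpr ⟨(fun i => a (Fin.castAdd j i), fun i => a (Fin.natAdd m i)),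
      mem_product.mpr ⟨mem_filter.mpr ⟨?_, ?_⟩, ?_⟩, Fin.append_castAdd_natAdd⟩
    · exact Fintype.mem_piFinset.mpr fun i => Fintype.mem_piFinset.mp ha.1 _
    · have hsplit := digitVal_append (b := b) (fun i => a (Fin.castAdd j i))
        (fun i => a (Fin.natAdd m i))
      rw [Fin.append_castAdd_natAdd] at hsplit
      have hsuffix :
          digitVal b j (fun i => a (Fin.natAdd m i)) / (b : ℝ) ^ m ≤ (b : ℝ)⁻¹ ^ m := by
        rw [inv_pow, ← one_div]
        exact div_le_div_of_nonneg_right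
          (digitVal_le_one hb fun i => digit_lt_of_mem_tuples hAb ha.1 _) (by positivity)
      linarith [ha.2]
    · exact Fintype.mem_piFinset.mpr fun i => Fintype.mem_piFinset.mp ha.1 _
  have hP := card_tuplesGE_le (m := m) hb hAb
    ((sub_le_self x (by positivity : (0 : ℝ) ≤ (b : ℝ)⁻¹ ^ m)).trans hx)
  have hbm : (b : ℝ) ^ m * (b : ℝ)⁻¹ ^ m = 1 := by
    rw [← mul_pow, mul_inv_cancel₀ (by positivity), one_pow]
  calc _ ≤ ((P ×ˢ tuples A j).card : ℝ) := by
        exact_mod_cast (card_le_card hsub).trans card_image_le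
    _ = P.card * A.card ^ j := by rw [card_product, card_tuples]; push_cast; ring
    _ ≤ ((b : ℝ) ^ m * (1 - x) + 1) * A.card ^ j := by
      gcongr
      linarith

lemma card_mul_rpow_neg_lt_one {N : ℕ} {β σ : ℝ} (hβ : 1 < β)
    (hs : Real.log N / Real.log β < σ) : N * β ^ (-σ) < 1 := by
  rcases N.eq_zero_or_pos with rfl | hN
  · simp
  have hβ0 : 0 < β := by linarith
  rw [Real.rpow_neg hβ0.le, ← div_eq_mul_inv, div_lt_one (by positivity),
    Real.lt_rpow_iff_log_lt (by positivity) hβ0]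
  exact (div_lt_iff₀ (Real.log_pos hβ)).mp hs

lemma exists_pow_mul_le_one_and_rpow_le {β t σ : ℝ} (hβ : 1 < β) (ht0 : 0 < t) (ht1 : t ≤ 1)
    (hσ : 0 ≤ σ) : ∃ m : ℕ, β ^ m * t ≤ 1 ∧ β ^ (-(m : ℝ) * σ) ≤ β ^ σ * t ^ σ := by
  have hβ0 : 0 < β := by linarith
  obtain ⟨m, hm, hm'⟩ := exists_nat_pow_near ((one_le_inv₀ ht0).mpr ht1) hβ
  refine ⟨m, ?_, ?_⟩
  · calc β ^ m * t ≤ t⁻¹ * t := by gcongr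
      _ = 1 := inv_mul_cancel₀ ht0.ne'
  · have hsplit : β ^ (-(m : ℝ) * σ) = β ^ σ * ((β ^ (m + 1))⁻¹) ^ σ := by
      rw [← Real.rpow_natCast, ← Real.rpow_neg hβ0.le, ← Real.rpow_mul hβ0.le,
        ← Real.rpow_add hβ0]
      push_cast
      ring_nf
    rw [hsplit]
    gcongr
    exact (inv_lt_of_inv_lt₀ ht0 hm').le

lemma tailMass_le (hb : 2 ≤ b) (hAb : A ⊆ range b) {σ : ℝ} (hq : A.card * (b : ℝ) ^ (-σ) < 1)
    {x : ℝ} (hx : x ≤ 1) (hm : (b : ℝ) ^ m * (1 - x) ≤ 1) :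
    tailMass b A σ x ≤
      ENNReal.ofReal (2 * (b : ℝ) ^ (-(m : ℝ) * σ) * (1 - A.card * (b : ℝ) ^ (-σ))⁻¹) := by
  set q := (A.card : ℝ) * (b : ℝ) ^ (-σ)
  have hb0 : (0 : ℝ) < b := by positivity
  have hq0 : 0 ≤ q := by positivity
  set F : ℕ → ENNReal := fun l => ∑ _a ∈ tuplesGE b A l x,
    ENNReal.ofReal ((b : ℝ) ^ (-(l : ℝ) * σ))
  have hF : ∀ l, F l = ENNReal.ofReal ((tuplesGE b A l x).card * (b : ℝ) ^ (-(l : ℝ) * σ)) := by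
    intro l
    rw [ENNReal.ofReal_mul (by positivity), ENNReal.ofReal_natCast, ← nsmul_eq_mul, ← sum_const]
  have hshort : ∀ l < m, F l = 0 := by
    intro l hl
    have hb2 : (2 : ℝ) ≤ b := by exact_mod_cast hb
    have hlm : (b : ℝ) ^ (l + 1) ≤ (b : ℝ) ^ m := pow_le_pow_right₀ (by linarith) hl
    have hsmall : (b : ℝ) ^ l * (1 - x) < 1 := by
      rw [pow_succ] at hlm
      nlinarith [mul_nonneg (pow_nonneg hb0.le l) (sub_nonneg.mpr hx)]
    have hcard : (tuplesGE b A l x).card = 0 :=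
      Nat.lt_one_iff.mp <| by
        exact_mod_cast (card_tuplesGE_le (by omega) hAb hx).trans_lt hsmall
    rw [hF, hcard, Nat.cast_zero, zero_mul, ENNReal.ofReal_zero]
  have hlong : ∀ j, F (j + m) ≤ ENNReal.ofReal (2 * (b : ℝ) ^ (-(m : ℝ) * σ) * q ^ j) := by
    intro j
    rw [add_comm, hF]
    refine ENNReal.ofReal_le_ofReal ?_
    have hpow : (b : ℝ) ^ (-((m + j : ℕ) : ℝ) * σ)
        = (b : ℝ) ^ (-(m : ℝ) * σ) * ((b : ℝ) ^ (-σ)) ^ j := by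
      rw [← Real.rpow_natCast ((b : ℝ) ^ (-σ)) j, ← Real.rpow_mul hb0.le, ← Real.rpow_add hb0]
      push_cast
      ring_nf
    have hcard := card_tuplesGE_add_le (A := A) (m := m) (j := j) (by omega) hAb hx
    calc _ ≤ ((b : ℝ) ^ m * (1 - x) + 1) * A.card ^ j * (b : ℝ) ^ (-((m + j : ℕ) : ℝ) * σ) := by
          gcongr
      _ ≤ 2 * (b : ℝ) ^ (-(m : ℝ) * σ) * q ^ j := by
          rw [hpow, mul_pow]
          have : 0 ≤ (A.card : ℝ) ^ j * (b : ℝ) ^ (-(m : ℝ) * σ) * ((b : ℝ) ^ (-σ)) ^ j := by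
            positivity
          nlinarith
  calc tailMass b A σ x = ∑' j, F (j + m) := by
        show ∑' l, F l = _
        rw [← (ENNReal.summable (f := fun j => F (j + m))).sum_add_tsum_nat_add',
          sum_eq_zero fun l hl => hshort l (mem_range.mp hl), zero_add]
    _ ≤ ∑' j, ENNReal.ofReal (2 * (b : ℝ) ^ (-(m : ℝ) * σ) * q ^ j) :=
        ENNReal.tsum_le_tsum hlong
    _ = _ := by
      rw [← ENNReal.ofReal_tsum_of_nonneg (fun j => by positivity)
        ((summable_geometric_of_lt_one hq0 hq).mul_left _), tsum_mul_left,
        tsum_geometric_of_lt_one hq0 hq]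

end DigitTuples

theorem mu_s_holder_general
    (b : ℕ) (hb : 2 ≤ b) (A : Finset ℕ) (hAb : A ⊆ Finset.range b)
    (s : ℂ) (hs : Real.log A.card / Real.log b < s.re) :
    ∃ K : ℝ, ∀ x ∈ Set.Ico (0:ℝ) 1,
      ∑' l : ℕ, ∑ a ∈ (tuples A l).filter (fun a => x ≤ digitVal b l a),
          ENNReal.ofReal ((b : ℝ) ^ (-(l : ℝ) * s.re))
        ≤ ENNReal.ofReal (K * (1 - x) ^ s.re) := by
  have hb1 : (1 : ℝ) < b := by exact_mod_cast hb
  have hσ : 0 ≤ s.re :=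
    (div_nonneg (Real.log_natCast_nonneg _) (Real.log_nonneg hb1.le)).trans hs.le
  have hq := card_mul_rpow_neg_lt_one hb1 hs
  refine ⟨2 * (b : ℝ) ^ s.re * (1 - A.card * (b : ℝ) ^ (-s.re))⁻¹, fun x hx => ?_⟩
  obtain ⟨m, hm, hmσ⟩ :=
    exists_pow_mul_le_one_and_rpow_le hb1 (sub_pos.mpr hx.2) (by linarith [hx.1]) hσ
  refine (tailMass_le hb hAb hq hx.2.le hm).trans (ENNReal.ofReal_le_ofReal ?_)
  have hK : 0 ≤ (1 - A.card * (b : ℝ) ^ (-s.re))⁻¹ := inv_nonneg.mpr (by linarith)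
  calc 2 * (b : ℝ) ^ (-(m : ℝ) * s.re) * (1 - A.card * (b : ℝ) ^ (-s.re))⁻¹
      ≤ 2 * ((b : ℝ) ^ s.re * (1 - x) ^ s.re) * (1 - A.card * (b : ℝ) ^ (-s.re))⁻¹ := by
        gcongr
    _ = _ := by ring

/-- Assume b−1 ∈ A, σ = Re s > log N / log b.  There exists K < ∞ such
that for all x ∈ [0,1), the total variation mass |μ_s|([x,1)) — i.e. the sum of
b^{−lσ} over all tuples with value ≥ x — is at most K(1−x)^σ. -/
theorem mu_s_holder
    (b : ℕ) (hb : 2 ≤ b) (A : Finset ℕ) (hA : A.Nonempty) (hAb : A ⊆ Finset.range b)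
    (hbA : b - 1 ∈ A)
    (s : ℂ) (hs : Real.log A.card / Real.log b < s.re) :
    ∃ K : ℝ, ∀ x ∈ Set.Ico (0:ℝ) 1,
      ∑' l : ℕ, ∑ a ∈ (tuples A l).filter (fun a => x ≤ digitVal b l a),
          ENNReal.ofReal ((b : ℝ) ^ (-(l : ℝ) * s.re))
        ≤ ENNReal.ofReal (K * (1 - x) ^ s.re) :=
  mu_s_holder_general b hb A hAb s hs
end
end

section
/- Assume f = max A = b−1 and let s be a complex number with Re s > log N / log b. Then for every real m ≥ 0: e^{−m} E(m) = Σ_{l=0}^∞ ( ∏_{k=1}^{l} α_B(−m b^{−k}) ) e^{−m b^{−l}} b^{−ls}, and this series converges absolutely (its l-th term is bounded in absolute value by N^l b^{−l·Re s}). -/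
open Finset

noncomputable section

/-- E(t) = 1 + Σ_{l≥1} Σ_{(a₁,…,a_l)∈A^l} e^{t(a₁/b+⋯+a_l/b^l)} b^{−ls},
the exponential generating function of the moments. -/
def egf (b : ℕ) (A : Finset ℕ) (s : ℂ) (t : ℝ) : ℂ :=
  ∑' l : ℕ, ∑ a ∈ tuples A l, ((Real.exp (t * digitVal b l a) : ℝ) : ℂ) * (b : ℂ) ^ (-(l : ℂ) * s)

/-- α_B(t) = Σ_{d∈B} e^{dt}. -/
def alphaB (B : Finset ℕ) (t : ℝ) : ℝ := ∑ d ∈ B, Real.exp (d * t)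

/-- The l-th term of the series appearing in Statement 6. -/
def egfTerm (b : ℕ) (B : Finset ℕ) (s : ℂ) (m : ℝ) (l : ℕ) : ℂ :=
  ((∏ k ∈ Finset.Icc 1 l, alphaB B (-(m * (b : ℝ) ^ (-(k : ℤ)))) : ℝ) : ℂ) *
    ((Real.exp (-(m * (b : ℝ) ^ (-(l : ℤ)))) : ℝ) : ℂ) * (b : ℂ) ^ (-(l : ℂ) * s)

/-! Since `A ⊆ {0, …, b-1}`, `α_B(-u) = e^{-(b-1)u} α_A(u)`, and the sum over `A^l` of
`e^{m(a₁/b + ⋯ + a_l/b^l)}` factors as `∏_{k ≤ l} α_A(m b^{-k})`. The factors `e^{-(b-1) m b^{-k}}`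
telescope, `∑_{k ≤ l} (b-1) b^{-k} = 1 - b^{-l}`, which turns `e^{-m}` into `e^{-m b^{-l}}`.
Each `α_B(u)` with `u ≤ 0` is at most `N`, so the `l`-th term is at most `(N b^{-Re s})^l`,
a convergent geometric series because `N < b^{Re s}`. -/
lemma prod_Icc_one_eq_prod_fin {M : Type*} [CommMonoid M] (g : ℕ → M) (l : ℕ) :
    ∏ k ∈ Icc 1 l, g k = ∏ i : Fin l, g ((i : ℕ) + 1) := by
  rw [Fin.prod_univ_eq_prod_range (fun i => g (i + 1)), range_eq_Ico, prod_Ico_add']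
  rfl

lemma sum_tuples_exp_mul_digitVal (b : ℕ) (A : Finset ℕ) (l : ℕ) (t : ℝ) :
    ∑ a ∈ tuples A l, Real.exp (t * digitVal b l a)
      = ∏ k ∈ Icc 1 l, alphaB A (t * (b : ℝ) ^ (-(k : ℤ))) := by
  have hdigit : ∀ (k : ℕ) (x : ℕ),
      Real.exp (t * ((x : ℝ) / (b : ℝ) ^ k)) = Real.exp (x * (t * (b : ℝ) ^ (-(k : ℤ)))) := by
    intro k x
    rw [zpow_neg, zpow_natCast]
    ring_nf
  simp only [prod_Icc_one_eq_prod_fin, alphaB, prod_univ_sum, tuples, digitVal, mul_sum,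
    Real.exp_sum, hdigit]

lemma injOn_const_tsub {c : ℕ} {A : Finset ℕ} (hA : ∀ a ∈ A, a ≤ c) :
    Set.InjOn (fun a => c - a) A :=
  fun x hx y hy hxy => tsub_inj_right (hA x hx) (hA y hy) hxy

lemma alphaB_image_tsub (c : ℕ) {A : Finset ℕ} (hA : ∀ a ∈ A, a ≤ c) (u : ℝ) :
    alphaB (A.image fun a => c - a) u = Real.exp (c * u) * alphaB A (-u) := by
  rw [alphaB, sum_image (injOn_const_tsub hA), alphaB, mul_sum]
  refine sum_congr rfl fun a ha => ?_
  rw [← Real.exp_add, Nat.cast_sub (hA a ha)]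
  ring_nf

lemma sum_Icc_one_sub_mul_zpow {x : ℝ} (hx : x ≠ 0) (l : ℕ) :
    ∑ k ∈ Icc 1 l, (x - 1) * x ^ (-(k : ℤ)) = 1 - x ^ (-(l : ℤ)) := by
  induction l with
  | zero => simp
  | succ n ih =>
    rw [sum_Icc_succ_top (by omega), ih]
    simp only [zpow_neg, zpow_natCast, pow_succ]
    field_simp
    ring

lemma exp_neg_mul_sum_tuples_exp {b : ℕ} (hb : 1 ≤ b) {A : Finset ℕ} (hA : ∀ a ∈ A, a ≤ b - 1)
    (m : ℝ) (l : ℕ) :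
    Real.exp (-m) * ∑ a ∈ tuples A l, Real.exp (m * digitVal b l a)
      = (∏ k ∈ Icc 1 l, alphaB (A.image fun a => b - 1 - a) (-(m * (b : ℝ) ^ (-(k : ℤ)))))
        * Real.exp (-(m * (b : ℝ) ^ (-(l : ℤ)))) := by
  have hsum : ∑ k ∈ Icc 1 l, ((b - 1 : ℕ) : ℝ) * -(m * (b : ℝ) ^ (-(k : ℤ)))
      = -m * (1 - (b : ℝ) ^ (-(l : ℤ))) := by
    rw [← sum_Icc_one_sub_mul_zpow (by positivity) l, mul_sum, Nat.cast_sub hb, Nat.cast_one]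
    exact sum_congr rfl fun k _ => by ring
  rw [sum_tuples_exp_mul_digitVal]
  simp only [alphaB_image_tsub (b - 1) hA, neg_neg, prod_mul_distrib, ← Real.exp_sum, hsum]
  rw [mul_right_comm, ← Real.exp_add]
  ring_nf

lemma alphaB_nonneg (B : Finset ℕ) (u : ℝ) : 0 ≤ alphaB B u :=
  sum_nonneg fun _ _ => (Real.exp_pos _).le

lemma alphaB_le_card (B : Finset ℕ) {u : ℝ} (hu : u ≤ 0) : alphaB B u ≤ B.card := by
  calc alphaB B u ≤ ∑ _d ∈ B, (1 : ℝ) := sum_le_sum fun d _ =>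
        Real.exp_le_one_iff.mpr (mul_nonpos_of_nonneg_of_nonpos d.cast_nonneg hu)
    _ = B.card := by simp

lemma norm_egfTerm_le {b : ℕ} (hb : 0 < b) (B : Finset ℕ) (s : ℂ) {m : ℝ} (hm : 0 ≤ m) (l : ℕ) :
    ‖egfTerm b B s m l‖ ≤ (B.card : ℝ) ^ l * (b : ℝ) ^ (-(l : ℝ) * s.re) := by
  have hu : ∀ k : ℕ, -(m * (b : ℝ) ^ (-(k : ℤ))) ≤ 0 := fun k => neg_nonpos.mpr (by positivity)
  have hprod : |∏ k ∈ Icc 1 l, alphaB B (-(m * (b : ℝ) ^ (-(k : ℤ))))| ≤ (B.card : ℝ) ^ l := by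
    rw [abs_of_nonneg (prod_nonneg fun k _ => alphaB_nonneg _ _)]
    calc _ ≤ ∏ _k ∈ Icc 1 l, (B.card : ℝ) :=
          prod_le_prod (fun k _ => alphaB_nonneg _ _) fun k _ => alphaB_le_card B (hu k)
      _ = _ := by simp
  have hexp : |Real.exp (-(m * (b : ℝ) ^ (-(l : ℤ))))| ≤ 1 := by
    rw [Real.abs_exp, Real.exp_le_one_iff]
    exact hu l
  rw [egfTerm, norm_mul, norm_mul, Complex.norm_real, Complex.norm_real,
    Complex.norm_natCast_cpow_of_pos hb]
  simp only [Complex.mul_re, Complex.neg_re, Complex.natCast_re, Complex.neg_im,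
    Complex.natCast_im, neg_zero, zero_mul, sub_zero, Real.norm_eq_abs]
  calc _ ≤ (B.card : ℝ) ^ l * 1 * (b : ℝ) ^ (-(l : ℝ) * s.re) := by gcongr
    _ = _ := by rw [mul_one]

lemma summable_pow_mul_rpow_neg_mul {N x σ : ℝ} (hN : 0 ≤ N) (hx : 1 < x)
    (hσ : Real.log N / Real.log x < σ) :
    Summable fun l : ℕ => N ^ l * x ^ (-(l : ℝ) * σ) := by
  have hx0 : 0 < x := by linarith
  rw [div_lt_iff₀ (Real.log_pos hx)] at hσ
  have hlt : N < x ^ σ := by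
    calc N ≤ Real.exp (Real.log N) := Real.le_exp_log N
      _ < Real.exp (Real.log x * σ) := Real.exp_lt_exp.mpr (by linarith)
      _ = x ^ σ := (Real.rpow_def_of_pos hx0 σ).symm
  have hr : N * x ^ (-σ) < 1 := by
    rwa [Real.rpow_neg hx0.le, ← div_eq_mul_inv, div_lt_one (by positivity)]
  refine (summable_geometric_of_lt_one (by positivity) hr).congr fun l => ?_
  rw [mul_pow, ← Real.rpow_natCast (x ^ (-σ)), ← Real.rpow_mul hx0.le]
  ring_nf

theorem egf_product_expansion_general
    (b : ℕ) (hb : 2 ≤ b) (A : Finset ℕ) (hAb : A ⊆ Finset.range b)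
    (s : ℂ) (hs : Real.log A.card / Real.log b < s.re) (m : ℝ) (hm : 0 ≤ m) :
    ((Real.exp (-m) : ℝ) : ℂ) * egf b A s m
        = ∑' l : ℕ, egfTerm b (A.image fun a => b - 1 - a) s m l
    ∧ (∀ l : ℕ, ‖egfTerm b (A.image fun a => b - 1 - a) s m l‖
        ≤ (A.card : ℝ) ^ l * (b : ℝ) ^ (-(l : ℝ) * s.re))
    ∧ Summable (fun l : ℕ => ‖egfTerm b (A.image fun a => b - 1 - a) s m l‖) := by
  have hA : ∀ a ∈ A, a ≤ b - 1 := fun a ha => Nat.le_sub_one_of_lt (mem_range.mp (hAb ha))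
  have hcard : (A.image fun a => b - 1 - a).card = A.card :=
    card_image_of_injOn (injOn_const_tsub hA)
  have hbound := hcard ▸ norm_egfTerm_le (by omega : 0 < b) (A.image fun a => b - 1 - a) s hm
  refine ⟨?_, hbound, ?_⟩
  · rw [egf, ← tsum_mul_left]
    refine tsum_congr fun l => ?_
    rw [egfTerm, ← Complex.ofReal_mul, ← exp_neg_mul_sum_tuples_exp (by omega) hA, ← sum_mul]
    push_cast
    ring
  · exact (summable_pow_mul_rpow_neg_mul A.card.cast_nonneg (by exact_mod_cast hb) hs)
      |>.of_nonneg_of_le (fun _ => norm_nonneg _) hbound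

/-- Assume max A = b−1 and Re s > log N / log b.  For every real m ≥ 0,
e^{−m}E(m) = Σ_{l≥0} (Π_{k=1}^l α_B(−mb^{−k})) e^{−mb^{−l}} b^{−ls}, the series
converging absolutely, its l-th term being bounded by N^l b^{−l·Re s}. -/
theorem egf_product_expansion
    (b : ℕ) (hb : 2 ≤ b) (A : Finset ℕ) (hA : A.Nonempty) (hAb : A ⊆ Finset.range b)
    (hbA : b - 1 ∈ A)
    (s : ℂ) (hs : Real.log A.card / Real.log b < s.re) (m : ℝ) (hm : 0 ≤ m) :
    ((Real.exp (-m) : ℝ) : ℂ) * egf b A s m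
        = ∑' l : ℕ, egfTerm b (A.image fun a => b - 1 - a) s m l
    ∧ (∀ l : ℕ, ‖egfTerm b (A.image fun a => b - 1 - a) s m l‖
        ≤ (A.card : ℝ) ^ l * (b : ℝ) ^ (-(l : ℝ) * s.re))
    ∧ Summable (fun l : ℕ => ‖egfTerm b (A.image fun a => b - 1 - a) s m l‖) :=
  egf_product_expansion_general b hb A hAb s hs m hm
end
end

section
/- Let B ⊆ {0,…,b−1} with 0 ∈ B. For every real t > 0, the infinite product γ_B(−t) = ∏_{i=0}^∞ α_B(−b^i t) converges absolutely and equals Σ_{n∈𝓑} e^{−nt}, the sum of e^{−nt} over all B-admissible non-negative integers n. -/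
/-!
Writing n = d + b q with d its last base-b digit, n is B-admissible iff d ∈ B and q is
(for n = 0 this uses 0 ∈ B). Hence multiplying α_B(-t) by the partial product for b t gives,
by induction on N, ∏_{i<N} α_B(-b^i t) = Σ_{n < b^N, n ∈ 𝓑} e^{-nt}. The product converges since
0 ≤ α_B(-s) - 1 ≤ |B| e^{-s} and b^i ≥ i, and the sums over n < b^N tend to the full series.
-/

open Finset

noncomputable section

/-- A non-negative integer is B-admissible when all its base-b digits lie in B. -/
def BAdm (b : ℕ) (B : Finset ℕ) (n : ℕ) : Prop := ∀ d ∈ Nat.digits b n, d ∈ B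

open Real Filter

theorem Finset.sum_range_mul_eq_sum_sum_range {M : Type*} [AddCommMonoid M] (g : ℕ → M)
    (m n : ℕ) : ∑ k ∈ range (m * n), g k = ∑ q ∈ range m, ∑ d ∈ range n, g (d + n * q) := by
  rw [← Fin.sum_univ_eq_sum_range, ← finProdFinEquiv.sum_comp, Fintype.sum_prod_type,
    ← Fin.sum_univ_eq_sum_range]
  simp only [finProdFinEquiv_apply_val, ← Fin.sum_univ_eq_sum_range (fun d => g (d + n * _))]

section

variable {b : ℕ} {B : Finset ℕ}

theorem bAdm_add_mul_iff (hb : 1 < b) (h0 : 0 ∈ B) {d q : ℕ} (hd : d < b) :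
    BAdm b B (d + b * q) ↔ d ∈ B ∧ BAdm b B q := by
  rcases eq_or_ne d 0 with rfl | hd0
  · rcases eq_or_ne q 0 with rfl | hq0
    · simp [BAdm, h0]
    · have h_digits := Nat.digits_add b hb 0 q hd (Or.inr hq0)
      rw [zero_add] at h_digits
      simp [BAdm, h_digits, h0]
  · simp [BAdm, Nat.digits_add b hb d q hd (Or.inl hd0)]

theorem indicator_bAdm_add_mul (hb : 1 < b) (h0 : 0 ∈ B) {d q : ℕ} (hd : d < b) (t : ℝ) :
    {n | BAdm b B n}.indicator (fun n : ℕ => rexp (-n * t)) (d + b * q) =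
      (B : Set ℕ).indicator (fun d : ℕ => rexp (-d * t)) d *
        {n | BAdm b B n}.indicator (fun n : ℕ => rexp (-n * (b * t))) q := by
  by_cases hdB : d ∈ B <;> by_cases hq : BAdm b B q <;>
    simp [hdB, hq, bAdm_add_mul_iff hb h0 hd, ← exp_add]
  ring

theorem alphaB_neg_eq_sum_range (hB : B ⊆ range b) (t : ℝ) :
    alphaB B (-t) = ∑ d ∈ range b, (B : Set ℕ).indicator (fun d : ℕ => rexp (-d * t)) d := by
  simp only [Finset.sum_indicator_subset _ hB, alphaB, mul_neg, neg_mul]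

theorem prod_range_alphaB_eq_sum_indicator (hb : 1 < b) (hB : B ⊆ range b) (h0 : 0 ∈ B)
    (N : ℕ) (t : ℝ) :
    ∏ i ∈ range N, alphaB B (-((b : ℝ) ^ i * t)) =
      ∑ n ∈ range (b ^ N), {n | BAdm b B n}.indicator (fun n : ℕ => rexp (-n * t)) n := by
  induction N generalizing t with
  | zero => simp [BAdm]
  | succ N ih =>
    have h_shift : ∀ i, (b : ℝ) ^ (i + 1) * t = (b : ℝ) ^ i * (b * t) := fun i => by ring
    rw [prod_range_succ', pow_zero, one_mul, pow_succ, sum_range_mul_eq_sum_sum_range]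
    simp only [h_shift]
    rw [ih, alphaB_neg_eq_sum_range hB, sum_mul_sum]
    refine sum_congr rfl fun q _ => sum_congr rfl fun d hd => ?_
    rw [indicator_bAdm_add_mul hb h0 (mem_range.mp hd), mul_comm]

theorem one_le_alphaB (h0 : 0 ∈ B) (t : ℝ) : 1 ≤ alphaB B t := by
  simpa [alphaB] using
    single_le_sum (f := fun d : ℕ => rexp (d * t)) (fun _ _ => (exp_pos _).le) h0

theorem alphaB_neg_sub_one_le (h0 : 0 ∈ B) {s : ℝ} (hs : 0 ≤ s) :
    alphaB B (-s) - 1 ≤ #B * rexp (-s) := by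
  have h_split : alphaB B (-s) = 1 + ∑ d ∈ B.erase 0, rexp (d * -s) := by
    simpa [alphaB] using (add_sum_erase B (fun d : ℕ => rexp (d * -s)) h0).symm
  have h_term : ∀ d ∈ B.erase 0, rexp (d * -s) ≤ rexp (-s) := fun d hd => by
    have : (1 : ℝ) ≤ d := Nat.one_le_cast.mpr (Nat.one_le_iff_ne_zero.mpr (ne_of_mem_erase hd))
    exact exp_le_exp.mpr (by nlinarith)
  calc alphaB B (-s) - 1 = ∑ d ∈ B.erase 0, rexp (d * -s) := by rw [h_split]; ring
    _ ≤ #(B.erase 0) * rexp (-s) := by simpa using sum_le_card_nsmul _ _ _ h_term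
    _ ≤ #B * rexp (-s) := by gcongr; exact erase_subset _ _

theorem multipliable_alphaB_neg_pow_mul (hb : 1 < b) (h0 : 0 ∈ B) {t : ℝ} (ht : 0 < t) :
    Multipliable fun i : ℕ => alphaB B (-((b : ℝ) ^ i * t)) := by
  have h_exp : Summable fun i : ℕ => rexp (-((b : ℝ) ^ i * t)) := by
    simpa [mul_comm] using summable_exp_nat_mul_of_ge (neg_lt_zero.mpr ht)
      (f := fun i => (b : ℝ) ^ i) fun i => by exact_mod_cast (Nat.lt_pow_self hb).le
  have h_dev : Summable fun i : ℕ => alphaB B (-((b : ℝ) ^ i * t)) - 1 :=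
    (h_exp.mul_left (#B : ℝ)).of_nonneg_of_le (fun i => sub_nonneg.mpr (one_le_alphaB h0 _))
      fun i => alphaB_neg_sub_one_le h0 (by positivity)
  simpa using Real.multipliable_one_add_of_summable h_dev

end

/-- Let 0 ∈ B ⊆ {0,…,b−1}.  For every t > 0, the infinite product
γ_B(−t) = Π_{i≥0} α_B(−b^i t) converges and equals Σ_{n∈𝓑} e^{−nt}, the sum over
B-admissible non-negative integers. -/
theorem gammaB_product_eq_sum
    (b : ℕ) (hb : 2 ≤ b) (B : Finset ℕ) (hB : B ⊆ Finset.range b) (h0 : 0 ∈ B)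
    (t : ℝ) (ht : 0 < t) :
    Multipliable (fun i : ℕ => alphaB B (-((b : ℝ) ^ i * t)))
    ∧ ∏' i : ℕ, alphaB B (-((b : ℝ) ^ i * t))
        = ∑' n : {n : ℕ // BAdm b B n}, Real.exp (-((n : ℕ) : ℝ) * t) := by
  have h_mult := multipliable_alphaB_neg_pow_mul hb h0 ht
  refine ⟨h_mult, tendsto_nhds_unique h_mult.hasProd.tendsto_prod_nat ?_⟩
  have h_summable : Summable fun n : ℕ => rexp (-n * t) := by
    simpa only [neg_mul_comm] using summable_exp_nat_mul_iff.mpr (neg_lt_zero.mpr ht)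
  have h_sum : HasSum ({n | BAdm b B n}.indicator fun n : ℕ => rexp (-n * t))
      (∑' n : {n : ℕ // BAdm b B n}, rexp (-((n : ℕ) : ℝ) * t)) :=
    hasSum_subtype_iff_indicator.mp (h_summable.subtype _).hasSum
  exact (h_sum.tendsto_sum_nat.comp (tendsto_pow_atTop_atTop_of_one_lt hb)).congr fun N =>
    (prod_range_alphaB_eq_sum_indicator hb hB h0 N t).symm
end
end

section
/- Let f = max A (possibly f < b−1), κ = (b−1)/f, and let s be a complex number with σ := Re s > log N / log b. Then the rescaled measure ν_s (the image of μ_s under multiplication by κ) satisfies the Hölder condition at 1 with exponent σ: there exists K < ∞ such that for all x ∈ [0,1), Σ_{l=0}^∞ Σ over those (a_1,…,a_l) ∈ A^l with κ·(a_1/b + ⋯ + a_l/b^l) ≥ x of b^{−lσ} ≤ K (1−x)^σ. -/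
open Finset

noncomputable section

open scoped ENNReal

/-! Write κ = (b - 1) / f. Since κ · digitVal of the constant tuple `f` of length `l` is
`1 - b⁻ˡ`, the defect `1 - κ · digitVal a` equals `b⁻ˡ + κ ∑ᵢ (f - aᵢ) b⁻⁽ⁱ⁺¹⁾`; as `κ ≥ 1` it is at
least `b⁻ˡ`, and at least `b⁻⁽ⁱ⁺¹⁾` whenever `aᵢ ≠ f`. So if `κ · digitVal a ≥ x` and `m` is least
with `b⁻⁽ᵐ⁺¹⁾ ≤ 1 - x`, then `a` has length at least `m` and starts with `m` copies of `f`: there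
are at most `Nᵏ` such tuples of length `m + k`. The sum is therefore at most the geometric series
`b^(-mσ) ∑ₖ (N b^(-σ))ᵏ`, which converges because `N < b^σ`, and `b^(-(m+1)σ) ≤ (1 - x)^σ`. -/

lemma card_le_pow_of_forall_castAdd_eq {A : Finset ℕ} {m k : ℕ} (p : Fin m → ℕ)
    {T : Finset (Fin (m + k) → ℕ)} (hT : T ⊆ tuples A (m + k))
    (hp : ∀ a ∈ T, ∀ i, a (Fin.castAdd k i) = p i) :
    T.card ≤ A.card ^ k := by
  calc T.card ≤ ((tuples A k).image (Fin.append p)).card := by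
        refine Finset.card_le_card fun a ha =>
          Finset.mem_image.2 ⟨fun j => a (Fin.natAdd m j), ?_, ?_⟩
        · exact Fintype.mem_piFinset.2 fun j => Fintype.mem_piFinset.1 (hT ha) _
        · conv_rhs => rw [← Fin.append_castAdd_natAdd (f := a)]
          simp only [hp a ha]
    _ ≤ (tuples A k).card := Finset.card_image_le
    _ = A.card ^ k := Fintype.card_piFinset_const _ _

lemma tsum_natCast_mul_pow_le {c : ℕ → ℕ} {N m : ℕ} {ρ : ℝ} (hρ : 0 ≤ ρ) (hNρ : N * ρ < 1)
    (hc₀ : ∀ l < m, c l = 0) (hc : ∀ k, c (m + k) ≤ N ^ k) :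
    ∑' l, (c l : ℝ≥0∞) * ENNReal.ofReal (ρ ^ l) ≤ ENNReal.ofReal (ρ ^ m / (1 - N * ρ)) := by
  rw [← ENNReal.summable.sum_add_tsum_nat_add' (k := m),
    Finset.sum_eq_zero fun l hl => by simp [hc₀ l (Finset.mem_range.1 hl)], zero_add]
  have hterm (k : ℕ) : (c (k + m) : ℝ≥0∞) * ENNReal.ofReal (ρ ^ (k + m))
      ≤ ENNReal.ofReal (ρ ^ m) * ENNReal.ofReal (N * ρ) ^ k := by
    calc (c (k + m) : ℝ≥0∞) * ENNReal.ofReal (ρ ^ (k + m))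
        ≤ ((N ^ k : ℕ) : ℝ≥0∞) * ENNReal.ofReal (ρ ^ (k + m)) := by
          gcongr; rw [add_comm]; exact hc k
      _ = ENNReal.ofReal (ρ ^ m) * ENNReal.ofReal (N * ρ) ^ k := by
          rw [← ENNReal.ofReal_natCast, ← ENNReal.ofReal_pow (by positivity),
            ← ENNReal.ofReal_mul (by positivity), ← ENNReal.ofReal_mul (by positivity)]
          congr 1; push_cast; ring
  calc ∑' k, (c (k + m) : ℝ≥0∞) * ENNReal.ofReal (ρ ^ (k + m))
      ≤ ∑' k, ENNReal.ofReal (ρ ^ m) * ENNReal.ofReal (N * ρ) ^ k := ENNReal.tsum_le_tsum hterm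
    _ = ENNReal.ofReal (ρ ^ m / (1 - N * ρ)) := by
      rw [ENNReal.tsum_mul_left, ENNReal.tsum_geometric, ← ENNReal.ofReal_one,
        ← ENNReal.ofReal_sub _ (by positivity), ← ENNReal.ofReal_inv_of_pos (by linarith),
        ← ENNReal.ofReal_mul (by positivity), div_eq_mul_inv]

lemma natCast_mul_rpow_neg_lt_one {N b : ℕ} (hb : 1 < b) {σ : ℝ}
    (hs : Real.log N / Real.log b < σ) : N * (b : ℝ) ^ (-σ) < 1 := by
  have hb₀ : (0 : ℝ) < b := by positivity
  rw [Real.rpow_neg hb₀.le, ← div_eq_mul_inv, div_lt_one (by positivity)]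
  exact Real.lt_rpow_of_log_lt hb₀ ((div_lt_iff₀ (Real.log_pos (by exact_mod_cast hb))).1 hs)

lemma rpow_neg_pow_le_rpow {b δ σ : ℝ} (hb : 0 < b) (hσ : 0 ≤ σ) {n : ℕ} (h : b⁻¹ ^ n ≤ δ) :
    (b ^ (-σ)) ^ n ≤ δ ^ σ := by
  calc (b ^ (-σ)) ^ n = (b⁻¹ ^ n) ^ σ := by
        rw [Real.rpow_pow_comm hb.le, Real.rpow_neg (by positivity),
          ← Real.inv_rpow (by positivity), inv_pow]
    _ ≤ δ ^ σ := Real.rpow_le_rpow (by positivity) h hσ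

lemma digitVal_const {b : ℕ} (hb : 1 < b) (l f : ℕ) :
    digitVal b l (fun _ => f) = f / (b - 1) * (1 - (b : ℝ)⁻¹ ^ l) := by
  have hb' : (1 : ℝ) < b := by exact_mod_cast hb
  have hb₁ : (b : ℝ) - 1 ≠ 0 := by linarith
  have hb₂ : 1 - (b : ℝ) ≠ 0 := by linarith
  rw [digitVal, Fin.sum_univ_eq_sum_range (fun i => (f : ℝ) / (b : ℝ) ^ (i + 1))]
  simp_rw [div_eq_mul_inv, ← inv_pow, pow_succ, ← mul_assoc, ← Finset.sum_mul, ← Finset.mul_sum,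
    geom_sum_eq (inv_lt_one_of_one_lt₀ hb').ne]
  field_simp
  ring

lemma one_sub_mul_digitVal {b f l : ℕ} (hb : 1 < b) (hf : 0 < f) (a : Fin l → ℕ) :
    1 - (b - 1) / f * digitVal b l a
      = (b : ℝ)⁻¹ ^ l + (b - 1) / f * ∑ i, ((f : ℝ) - a i) / (b : ℝ) ^ ((i : ℕ) + 1) := by
  have hb₁ : (b : ℝ) - 1 ≠ 0 := by
    have : (1 : ℝ) < b := by exact_mod_cast hb
    linarith
  have hdigit : digitVal b l a = digitVal b l (fun _ => f)
      - ∑ i, ((f : ℝ) - a i) / (b : ℝ) ^ ((i : ℕ) + 1) := by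
    simp only [digitVal, ← Finset.sum_sub_distrib, sub_div, sub_sub_cancel]
  rw [hdigit, digitVal_const hb]
  field_simp
  ring

lemma inv_pow_le_one_sub_mul_digitVal {b f l : ℕ} (hb : 1 < b) (hf : 0 < f)
    {a : Fin l → ℕ} (ha : ∀ i, a i ≤ f) :
    (b : ℝ)⁻¹ ^ l ≤ 1 - (b - 1) / f * digitVal b l a := by
  rw [one_sub_mul_digitVal hb hf]
  have : (1 : ℝ) ≤ b := by exact_mod_cast hb.le
  have hsum : 0 ≤ ∑ i, ((f : ℝ) - a i) / (b : ℝ) ^ ((i : ℕ) + 1) :=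
    Finset.sum_nonneg fun i _ => div_nonneg (sub_nonneg.2 (by exact_mod_cast ha i)) (by positivity)
  have : 0 ≤ ((b : ℝ) - 1) / f := div_nonneg (by linarith) (by positivity)
  nlinarith

lemma inv_pow_succ_le_one_sub_mul_digitVal {b f l : ℕ} (hb : 1 < b) (hfb : f < b)
    {a : Fin l → ℕ} (ha : ∀ i, a i ≤ f) {i : Fin l} (hi : a i ≠ f) :
    (b : ℝ)⁻¹ ^ ((i : ℕ) + 1) ≤ 1 - (b - 1) / f * digitVal b l a := by
  have hai : a i < f := (ha i).lt_of_ne hi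
  have hf : (0 : ℝ) < f := by exact_mod_cast (Nat.zero_le _).trans_lt hai
  rw [one_sub_mul_digitVal hb (by exact_mod_cast hf)]
  have hterm : ((f : ℝ) - a i) / (b : ℝ) ^ ((i : ℕ) + 1)
      ≤ ∑ j, ((f : ℝ) - a j) / (b : ℝ) ^ ((j : ℕ) + 1) :=
    Finset.single_le_sum (f := fun j => ((f : ℝ) - a j) / (b : ℝ) ^ ((j : ℕ) + 1))
      (fun j _ => div_nonneg (sub_nonneg.2 (by exact_mod_cast ha j)) (by positivity))
      (Finset.mem_univ i)
  have hκ : 1 ≤ ((b : ℝ) - 1) / f := by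
    rw [le_div_iff₀ hf]
    have : (f : ℝ) + 1 ≤ b := by exact_mod_cast hfb
    linarith
  have hgap : (1 : ℝ) ≤ f - a i := by
    have : (a i : ℝ) + 1 ≤ f := by exact_mod_cast hai
    linarith
  calc (b : ℝ)⁻¹ ^ ((i : ℕ) + 1)
        ≤ ((b : ℝ) - 1) / f * (((f : ℝ) - a i) / (b : ℝ) ^ ((i : ℕ) + 1)) := by
        rw [inv_pow, ← one_div, ← mul_div_assoc]
        gcongr
        nlinarith
    _ ≤ _ := by
        have : 0 ≤ ((b : ℝ) - 1) / f := by linarith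
        have : (0 : ℝ) ≤ (b : ℝ)⁻¹ ^ l := by positivity
        nlinarith

lemma le_length_and_prefix_eq_of_le_mul_digitVal {A : Finset ℕ} {b f m l : ℕ} {x : ℝ}
    (hb : 1 < b) (hf : 0 < f) (hfb : f < b) (hfmax : ∀ a ∈ A, a ≤ f)
    (hm : ∀ n, (b : ℝ)⁻¹ ^ (n + 1) ≤ 1 - x → m ≤ n)
    {a : Fin l → ℕ} (ha : a ∈ tuples A l) (hx : x ≤ (b - 1) / f * digitVal b l a) :
    m ≤ l ∧ ∀ i : Fin l, (i : ℕ) < m → a i = f := by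
  have ha' (i : Fin l) : a i ≤ f := hfmax _ (Fintype.mem_piFinset.1 ha i)
  refine ⟨hm l ?_, fun i hi => by_contra fun hai => hi.not_ge (hm i ?_)⟩
  · have : (b : ℝ)⁻¹ ^ (l + 1) ≤ (b : ℝ)⁻¹ ^ l :=
      pow_le_pow_of_le_one (by positivity) (inv_le_one_of_one_le₀ (by exact_mod_cast hb.le))
        l.le_succ
    linarith [inv_pow_le_one_sub_mul_digitVal hb hf ha']
  · linarith [inv_pow_succ_le_one_sub_mul_digitVal hb hfb ha' hai]

lemma exists_tsum_card_filter_le {A : Finset ℕ} {b f : ℕ} (hb : 1 < b) (hf : 0 < f)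
    (hfb : f < b) (hfmax : ∀ a ∈ A, a ≤ f) {ρ : ℝ} (hρ : 0 ≤ ρ) (hNρ : A.card * ρ < 1)
    {x : ℝ} (hx : x < 1) :
    ∃ m : ℕ, (b : ℝ)⁻¹ ^ (m + 1) ≤ 1 - x ∧
      ∑' l, (((tuples A l).filter
          (fun a => x ≤ ((b : ℝ) - 1) / f * digitVal b l a)).card : ℝ≥0∞) * ENNReal.ofReal (ρ ^ l)
        ≤ ENNReal.ofReal (ρ ^ m / (1 - A.card * ρ)) := by
  have hbinv : (b : ℝ)⁻¹ < 1 := inv_lt_one_of_one_lt₀ (by exact_mod_cast hb)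
  have hthreshold : ∃ n : ℕ, (b : ℝ)⁻¹ ^ (n + 1) ≤ 1 - x := by
    obtain ⟨n, hn⟩ := exists_pow_lt_of_lt_one (sub_pos.2 hx) hbinv
    exact ⟨n, (pow_le_pow_of_le_one (by positivity) hbinv.le n.le_succ).trans hn.le⟩
  refine ⟨Nat.find hthreshold, Nat.find_spec hthreshold, ?_⟩
  have hS {l : ℕ} {a : Fin l → ℕ}
      (ha : a ∈ (tuples A l).filter (fun a => x ≤ ((b : ℝ) - 1) / f * digitVal b l a)) :
      Nat.find hthreshold ≤ l ∧ ∀ i : Fin l, (i : ℕ) < Nat.find hthreshold → a i = f :=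
    le_length_and_prefix_eq_of_le_mul_digitVal hb hf hfb hfmax
      (fun _ hn => Nat.find_min' hthreshold hn)
      (Finset.mem_filter.1 ha).1 (Finset.mem_filter.1 ha).2
  exact tsum_natCast_mul_pow_le hρ hNρ
    (fun l hl => Finset.card_eq_zero.2 <| Finset.eq_empty_of_forall_notMem fun a ha =>
      hl.not_ge (hS ha).1)
    (fun k => card_le_pow_of_forall_castAdd_eq (fun _ => f) (Finset.filter_subset _ _)
      fun a ha i => (hS ha).2 _ i.isLt)

theorem nu_s_holder_general
    (b : ℕ) (hb : 2 ≤ b) (A : Finset ℕ) (hAb : A ⊆ Finset.range b)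
    (f : ℕ) (hfA : f ∈ A) (hfmax : ∀ a ∈ A, a ≤ f) (hf0 : 0 < f)
    (s : ℂ) (hs : Real.log A.card / Real.log b < s.re) :
    ∃ K : ℝ, ∀ x ∈ Set.Ico (0:ℝ) 1,
      ∑' l : ℕ, ∑ a ∈ (tuples A l).filter
          (fun a => x ≤ ((b : ℝ) - 1) / (f : ℝ) * digitVal b l a),
        ENNReal.ofReal ((b : ℝ) ^ (-(l : ℝ) * s.re))
      ≤ ENNReal.ofReal (K * (1 - x) ^ s.re) := by
  have hb₀ : (0 : ℝ) < b := by positivity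
  have hσ : 0 ≤ s.re := (div_nonneg (Real.log_natCast_nonneg _)
    (Real.log_nonneg (by exact_mod_cast one_le_two.trans hb))).trans hs.le
  set ρ : ℝ := (b : ℝ) ^ (-s.re) with hρ_def
  have hρ : 0 < ρ := by positivity
  have hNρ : A.card * ρ < 1 := natCast_mul_rpow_neg_lt_one hb hs
  have h₁ : 0 < 1 - A.card * ρ := by linarith
  refine ⟨(ρ * (1 - A.card * ρ))⁻¹, fun x hx => ?_⟩
  obtain ⟨m, hm, hsum⟩ := exists_tsum_card_filter_le hb hf0 (Finset.mem_range.1 (hAb hfA)) hfmax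
    hρ.le hNρ hx.2
  calc _ = ∑' l, (((tuples A l).filter (fun a => x ≤ ((b : ℝ) - 1) / f * digitVal b l a)).card
          : ℝ≥0∞) * ENNReal.ofReal (ρ ^ l) :=
        tsum_congr fun l => by
          rw [Finset.sum_const, nsmul_eq_mul, hρ_def, ← Real.rpow_mul_natCast hb₀.le, neg_mul_comm,
            mul_comm (l : ℝ)]
    _ ≤ ENNReal.ofReal (ρ ^ m / (1 - A.card * ρ)) := hsum
    _ ≤ ENNReal.ofReal ((ρ * (1 - A.card * ρ))⁻¹ * (1 - x) ^ s.re) := by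
        refine ENNReal.ofReal_le_ofReal ?_
        calc ρ ^ m / (1 - A.card * ρ) = (ρ * (1 - A.card * ρ))⁻¹ * ρ ^ (m + 1) := by
              field_simp; ring
          _ ≤ _ := by gcongr; exact rpow_neg_pow_le_rpow hb₀ hσ hm

/-- Let f = max A (possibly f < b−1), κ = (b−1)/f, σ = Re s > log N / log b.
The rescaled measure ν_s satisfies the Hölder condition at 1 with exponent σ:
there is K < ∞ with Σ over tuples whose rescaled value κ·(a₁/b+⋯+a_l/b^l) is ≥ x of
b^{−lσ} bounded by K(1−x)^σ, for all x ∈ [0,1). -/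
theorem nu_s_holder
    (b : ℕ) (hb : 2 ≤ b) (A : Finset ℕ) (hA : A.Nonempty) (hAb : A ⊆ Finset.range b)
    (f : ℕ) (hfA : f ∈ A) (hfmax : ∀ a ∈ A, a ≤ f) (hf0 : 0 < f)
    (s : ℂ) (hs : Real.log A.card / Real.log b < s.re) :
    ∃ K : ℝ, ∀ x ∈ Set.Ico (0:ℝ) 1,
      ∑' l : ℕ, ∑ a ∈ (tuples A l).filter
          (fun a => x ≤ ((b : ℝ) - 1) / (f : ℝ) * digitVal b l a),
        ENNReal.ofReal ((b : ℝ) ^ (-(l : ℝ) * s.re))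
      ≤ ENNReal.ofReal (K * (1 - x) ^ s.re) :=
  nu_s_holder_general b hb A hAb f hfA hfmax hf0 s hs
end
end
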